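/- arXiv:2404.16971 — 3 statements merged into one kernel-verified Lean document; each statement's English description precedes it below -/
import Mathlib

section
/- Let T be a locally satisfiable negative local theory in a local language L and let Γ be a set of Π1-local formulas of L in a fixed set of free variables x. Then Γ is locally satisfiable in T (i.e. realized by some tuple in some local model of T) if and only if Γ is boundedly satisfiable in T. -/
noncomputable section

structure LocalLanguage : Type 1 where
  Sorts : Type
  Rel : (n : ℕ) → (Fin n → Sorts) → Type
  Const : Sorts → Type
  Loc : Sorts → Type
  locToRel : {s : Sorts} → Loc s → Rel 2 ![s, s]
  dd0 : (s : Sorts) → Loc s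
  locMul : {s : Sorts} → Loc s → Loc s → Loc s
  locLe : {s : Sorts} → Loc s → Loc s → Prop
  locMul_assoc : ∀ {s} (d₁ d₂ d₃ : Loc s), locMul (locMul d₁ d₂) d₃ = locMul d₁ (locMul d₂ d₃)
  dd0_locMul : ∀ {s} (d : Loc s), locMul (dd0 s) d = d
  locMul_dd0 : ∀ {s} (d : Loc s), locMul d (dd0 s) = d
  locLe_refl : ∀ {s} (d : Loc s), locLe d d
  locLe_trans : ∀ {s} (d₁ d₂ d₃ : Loc s), locLe d₁ d₂ → locLe d₂ d₃ → locLe d₁ d₃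
  locLe_antisymm : ∀ {s} (d₁ d₂ : Loc s), locLe d₁ d₂ → locLe d₂ d₁ → d₁ = d₂
  dd0_locLe : ∀ {s} (d : Loc s), locLe (dd0 s) d
  locMul_mono : ∀ {s} (d₁ d₂ e₁ e₂ : Loc s), locLe d₁ e₁ → locLe d₂ e₂ →
    locLe (locMul d₁ d₂) (locMul e₁ e₂)
  bound : {s : Sorts} → Const s → Const s → Loc s

structure LStructure (L : LocalLanguage) : Type 1 where
  Dom : L.Sorts → Type
  relMap : {n : ℕ} → {ρ : Fin n → L.Sorts} → L.Rel n ρ → ((i : Fin n) → Dom (ρ i)) → Prop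
  constMap : {s : L.Sorts} → L.Const s → Dom s

def dpair {C : Fin 2 → Sort*} (a : C 0) (b : C 1) : (i : Fin 2) → C i
  | ⟨0, _⟩ => a
  | ⟨1, _⟩ => b

def LStructure.locRel {L : LocalLanguage} (M : LStructure L) {s : L.Sorts}
    (d : L.Loc s) (a b : M.Dom s) : Prop :=
  M.relMap (L.locToRel d) (dpair a b)

structure IsLocal {L : LocalLanguage} (M : LStructure L) : Prop where
  symm : ∀ {s : L.Sorts} (d : L.Loc s) (a b : M.Dom s), M.locRel d a b → M.locRel d b a
  mono : ∀ {s : L.Sorts} (d₁ d₂ : L.Loc s), L.locLe d₁ d₂ →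
    ∀ (a b : M.Dom s), M.locRel d₁ a b → M.locRel d₂ a b
  comp : ∀ {s : L.Sorts} (d₁ d₂ : L.Loc s) (a b c : M.Dom s),
    M.locRel d₁ a b → M.locRel d₂ b c → M.locRel (L.locMul d₁ d₂) a c
  boundAx : ∀ {s : L.Sorts} (c₁ c₂ : L.Const s),
    M.locRel (L.bound c₁ c₂) (M.constMap c₁) (M.constMap c₂)
  total : ∀ {s : L.Sorts} (a b : M.Dom s), ∃ d : L.Loc s, M.locRel d a b
  dd0_eq : ∀ {s : L.Sorts} (a b : M.Dom s), M.locRel (L.dd0 s) a b ↔ a = b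

/-! ## Syntax -/

/-- Terms: variables or constants (the language is relational). -/
inductive LTerm (L : LocalLanguage) (α : Type) (σ : α → L.Sorts) : L.Sorts → Type
  | var (a : α) : LTerm L α σ (σ a)
  | const {s : L.Sorts} (c : L.Const s) : LTerm L α σ s

/-- Sort assignment for a context extended by one variable of sort `s`. -/
abbrev osort {L : LocalLanguage} {α : Type} (s : L.Sorts) (σ : α → L.Sorts) :
    Option α → L.Sorts :=
  fun o => Option.elim o s σ

/-- Positive formulas: atomic, conjunction, disjunction, existential quantification. -/
inductive PosForm (L : LocalLanguage) : (α : Type) → (α → L.Sorts) → Type 1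
  | rel {α : Type} {σ : α → L.Sorts} {n : ℕ} {ρ : Fin n → L.Sorts}
      (R : L.Rel n ρ) (ts : (i : Fin n) → LTerm L α σ (ρ i)) : PosForm L α σ
  | and {α : Type} {σ : α → L.Sorts} (φ ψ : PosForm L α σ) : PosForm L α σ
  | or {α : Type} {σ : α → L.Sorts} (φ ψ : PosForm L α σ) : PosForm L α σ
  | ex {α : Type} {σ : α → L.Sorts} (s : L.Sorts)
      (φ : PosForm L (Option α) (osort s σ)) : PosForm L α σ

/-- Local positive formulas: atomic, conjunction, disjunction, local existential
quantification `∃ x ∈ d(t) φ`. -/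
inductive LPosForm (L : LocalLanguage) : (α : Type) → (α → L.Sorts) → Type 1
  | rel {α : Type} {σ : α → L.Sorts} {n : ℕ} {ρ : Fin n → L.Sorts}
      (R : L.Rel n ρ) (ts : (i : Fin n) → LTerm L α σ (ρ i)) : LPosForm L α σ
  | and {α : Type} {σ : α → L.Sorts} (φ ψ : LPosForm L α σ) : LPosForm L α σ
  | or {α : Type} {σ : α → L.Sorts} (φ ψ : LPosForm L α σ) : LPosForm L α σ
  | lex {α : Type} {σ : α → L.Sorts} (s : L.Sorts) (d : L.Loc s) (t : LTerm L α σ s)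
      (φ : LPosForm L (Option α) (osort s σ)) : LPosForm L α σ

/-- Local formulas: atomic, negation, conjunction, local existential quantification. -/
inductive LForm (L : LocalLanguage) : (α : Type) → (α → L.Sorts) → Type 1
  | rel {α : Type} {σ : α → L.Sorts} {n : ℕ} {ρ : Fin n → L.Sorts}
      (R : L.Rel n ρ) (ts : (i : Fin n) → LTerm L α σ (ρ i)) : LForm L α σ
  | not {α : Type} {σ : α → L.Sorts} (φ : LForm L α σ) : LForm L α σ
  | and {α : Type} {σ : α → L.Sorts} (φ ψ : LForm L α σ) : LForm L α σ
  | lex {α : Type} {σ : α → L.Sorts} (s : L.Sorts) (d : L.Loc s) (t : LTerm L α σ s)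
      (φ : LForm L (Option α) (osort s σ)) : LForm L α σ

/-! ## Semantics -/

def LTerm.realize {L : LocalLanguage} (M : LStructure L) {α : Type} {σ : α → L.Sorts}
    (v : (a : α) → M.Dom (σ a)) : {s : L.Sorts} → LTerm L α σ s → M.Dom s
  | _, .var a => v a
  | _, .const c => M.constMap c

/-- Extension of a valuation by a value for the new variable. -/
def vcons {L : LocalLanguage} {M : LStructure L} {α : Type} {σ : α → L.Sorts} {s : L.Sorts}
    (x : M.Dom s) (v : (a : α) → M.Dom (σ a)) : (o : Option α) → M.Dom (osort s σ o)
  | none => x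
  | some a => v a

def PosForm.Realize {L : LocalLanguage} (M : LStructure L) :
    {α : Type} → {σ : α → L.Sorts} → PosForm L α σ → ((a : α) → M.Dom (σ a)) → Prop
  | _, _, .rel R ts, v => M.relMap R (fun i => (ts i).realize M v)
  | _, _, .and φ ψ, v => φ.Realize M v ∧ ψ.Realize M v
  | _, _, .or φ ψ, v => φ.Realize M v ∨ ψ.Realize M v
  | _, _, .ex s φ, v => ∃ x : M.Dom s, φ.Realize M (vcons x v)

def LPosForm.Realize {L : LocalLanguage} (M : LStructure L) :
    {α : Type} → {σ : α → L.Sorts} → LPosForm L α σ → ((a : α) → M.Dom (σ a)) → Prop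
  | _, _, .rel R ts, v => M.relMap R (fun i => (ts i).realize M v)
  | _, _, .and φ ψ, v => φ.Realize M v ∧ ψ.Realize M v
  | _, _, .or φ ψ, v => φ.Realize M v ∨ ψ.Realize M v
  | _, _, .lex s d t φ, v =>
      ∃ x : M.Dom s, M.locRel d x (t.realize M v) ∧ φ.Realize M (vcons x v)

def LForm.Realize {L : LocalLanguage} (M : LStructure L) :
    {α : Type} → {σ : α → L.Sorts} → LForm L α σ → ((a : α) → M.Dom (σ a)) → Prop
  | _, _, .rel R ts, v => M.relMap R (fun i => (ts i).realize M v)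
  | _, _, .not φ, v => ¬ φ.Realize M v
  | _, _, .and φ ψ, v => φ.Realize M v ∧ ψ.Realize M v
  | _, _, .lex s d t φ, v =>
      ∃ x : M.Dom s, M.locRel d x (t.realize M v) ∧ φ.Realize M (vcons x v)

/-- Quantifier-free positive formulas. -/
inductive PosForm.IsQF {L : LocalLanguage} : {α : Type} → {σ : α → L.Sorts} → PosForm L α σ → Prop
  | rel {α : Type} {σ : α → L.Sorts} {n : ℕ} {ρ : Fin n → L.Sorts}
      (R : L.Rel n ρ) (ts : (i : Fin n) → LTerm L α σ (ρ i)) : PosForm.IsQF (.rel R ts)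
  | and {α : Type} {σ : α → L.Sorts} {φ ψ : PosForm L α σ} :
      PosForm.IsQF φ → PosForm.IsQF ψ → PosForm.IsQF (.and φ ψ)
  | or {α : Type} {σ : α → L.Sorts} {φ ψ : PosForm L α σ} :
      PosForm.IsQF φ → PosForm.IsQF ψ → PosForm.IsQF (.or φ ψ)


/-! ## Sentences, theories, models -/

/-- Sort assignment for the empty context. -/
abbrev emptySorts (L : LocalLanguage) : Empty → L.Sorts := fun e => e.elim

/-- Positive sentences. -/
abbrev PosSentence (L : LocalLanguage) := PosForm L Empty (emptySorts L)

/-- A positive sentence holds in a structure. -/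
def PosSentence.RealizedIn {L : LocalLanguage} (φ : PosSentence L) (M : LStructure L) : Prop :=
  φ.Realize M (fun e => e.elim)

/-- We represent a negative theory by the set of positive sentences whose negations
belong to it.  `M` is a local model of `T` if `M` is local and satisfies the negation of
every positive sentence in `T`. -/
def LocalModel {L : LocalLanguage} (M : LStructure L) (T : Set (PosSentence L)) : Prop :=
  IsLocal M ∧ ∀ φ ∈ T, ¬ φ.RealizedIn M

/-- `T` (a set of positive sentences standing for the negative theory `{¬φ : φ ∈ T}`)
is a negative local theory if it is closed under local implication: any negative sentence
true in every local model of `T` is already in `T`. -/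
def IsNegLocalTheory {L : LocalLanguage} (T : Set (PosSentence L)) : Prop :=
  ∀ φ : PosSentence L, (∀ M : LStructure L, LocalModel M T → ¬ φ.RealizedIn M) → φ ∈ T

/-- `T` is locally satisfiable: it has a local model. -/
def LocSat {L : LocalLanguage} (T : Set (PosSentence L)) : Prop :=
  ∃ M : LStructure L, LocalModel M T

/-- The negative theory of a structure (as the set of positive sentences failing in it). -/
def ThNeg {L : LocalLanguage} (M : LStructure L) : Set (PosSentence L) :=
  {φ | ¬ φ.RealizedIn M}

/-! ## Homomorphisms -/

structure LHom {L : LocalLanguage} (M N : LStructure L) where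
  toFun : (s : L.Sorts) → M.Dom s → N.Dom s
  map_rel : ∀ {n : ℕ} {ρ : Fin n → L.Sorts} (R : L.Rel n ρ) (x : (i : Fin n) → M.Dom (ρ i)),
    M.relMap R x → N.relMap R (fun i => toFun (ρ i) (x i))
  map_const : ∀ {s : L.Sorts} (c : L.Const s), toFun s (M.constMap c) = N.constMap c

def LHom.comp {L : LocalLanguage} {M N P : LStructure L} (g : LHom N P) (f : LHom M N) :
    LHom M P where
  toFun s := g.toFun s ∘ f.toFun s
  map_rel R x h := g.map_rel R _ (f.map_rel R x h)
  map_const c := by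
    simp only [Function.comp_apply, f.map_const, g.map_const]

def LHom.id {L : LocalLanguage} (M : LStructure L) : LHom M M where
  toFun _ := fun x => x
  map_rel _ _ h := h
  map_const _ := rfl

/-- A homomorphism is a positive embedding if it reflects all positive formulas. -/
def LHom.IsPosEmbedding {L : LocalLanguage} {M N : LStructure L} (h : LHom M N) : Prop :=
  ∀ (α : Type) (σ : α → L.Sorts) (φ : PosForm L α σ) (v : (a : α) → M.Dom (σ a)),
    φ.Realize N (fun a => h.toFun (σ a) (v a)) → φ.Realize M v

/-- A local positively closed model of `T`. -/
def IsPC {L : LocalLanguage} (M : LStructure L) (T : Set (PosSentence L)) : Prop :=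
  LocalModel M T ∧
    ∀ (N : LStructure L) (h : LHom M N), LocalModel N T → h.IsPosEmbedding

/-- An endomorphism is an automorphism if it has a two-sided inverse homomorphism. -/
def LHom.IsAuto {L : LocalLanguage} {M : LStructure L} (f : LHom M M) : Prop :=
  ∃ g : LHom M M, g.comp f = LHom.id M ∧ f.comp g = LHom.id M

/-- Isomorphism of structures. -/
def Isomorphic {L : LocalLanguage} (M N : LStructure L) : Prop :=
  ∃ (f : LHom M N) (g : LHom N M), g.comp f = LHom.id M ∧ f.comp g = LHom.id N

/-! ## Types -/

/-- The local positive type of a tuple. -/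
def ltp {L : LocalLanguage} (M : LStructure L) {α : Type} {σ : α → L.Sorts}
    (v : (a : α) → M.Dom (σ a)) : Set (LPosForm L α σ) :=
  {φ | φ.Realize M v}

/-- The positive type of a tuple. -/
def ptp {L : LocalLanguage} (M : LStructure L) {α : Type} {σ : α → L.Sorts}
    (v : (a : α) → M.Dom (σ a)) : Set (PosForm L α σ) :=
  {φ | φ.Realize M v}

/-- A partial local positive type of `T` on `(α, σ)`: a set of local positive formulas
realized by some tuple in some local model of `T`. -/
def IsPartialLType {L : LocalLanguage} (T : Set (PosSentence L)) {α : Type}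
    {σ : α → L.Sorts} (Γ : Set (LPosForm L α σ)) : Prop :=
  ∃ (M : LStructure L) (v : (a : α) → M.Dom (σ a)),
    LocalModel M T ∧ ∀ φ ∈ Γ, LPosForm.Realize M φ v

/-- A local positive type: a maximal partial local positive type. -/
def IsLType {L : LocalLanguage} (T : Set (PosSentence L)) {α : Type}
    {σ : α → L.Sorts} (Γ : Set (LPosForm L α σ)) : Prop :=
  IsPartialLType T Γ ∧ ∀ Γ' : Set (LPosForm L α σ), IsPartialLType T Γ' → Γ ⊆ Γ' → Γ' = Γ

/-- A variable `(α, σ)` is pointed if every sort not occurring among its sorts carries a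
constant symbol. -/
def VPointed {L : LocalLanguage} {α : Type} (σ : α → L.Sorts) : Prop :=
  ∀ s : L.Sorts, s ∉ Set.range σ → Nonempty (L.Const s)


/-! ## Bounds and bounded satisfiability -/

/-- Pair of terms as arguments for a binary relation symbol. -/
def tpair {L : LocalLanguage} {α : Type} {σ : α → L.Sorts} {s t : L.Sorts}
    (t₁ : LTerm L α σ s) (t₂ : LTerm L α σ t) : (i : Fin 2) → LTerm L α σ (![s, t] i) :=
  dpair t₁ t₂

/-- A bound of the variable `(α, σ)`: a choice, for every single variable whose sort
carries a constant symbol, of a locality relation and a constant, and for every pair of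
single variables of the same sort, of a locality relation. -/
structure VBound (L : LocalLanguage) (α : Type) (σ : α → L.Sorts) where
  dConst : (a : α) → Nonempty (L.Const (σ a)) → L.Loc (σ a)
  cConst : (a : α) → Nonempty (L.Const (σ a)) → L.Const (σ a)
  dPair : (a b : α) → σ a = σ b → L.Loc (σ a)

/-- The set of (atomic, quantifier-free) local positive formulas making up a bound:
`d_a(x_a, c_a)` and `d_{a,b}(x_a, x_b)`. -/
def VBound.toSet {L : LocalLanguage} {α : Type} {σ : α → L.Sorts} (B : VBound L α σ) :
    Set (LPosForm L α σ) :=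
  {φ | (∃ (a : α) (h : Nonempty (L.Const (σ a))),
          φ = LPosForm.rel (L.locToRel (B.dConst a h))
                (tpair (LTerm.var a) (LTerm.const (B.cConst a h)))) ∨
       (∃ (a b : α) (e : σ a = σ b),
          φ = LPosForm.rel (L.locToRel (B.dPair a b e))
                (tpair (LTerm.var a) (e.symm ▸ LTerm.var b)))}

/-- A bound holds of a tuple if all its formulas do. -/
def VBound.Holds {L : LocalLanguage} {α : Type} {σ : α → L.Sorts} (B : VBound L α σ)
    (M : LStructure L) (v : (a : α) → M.Dom (σ a)) : Prop :=
  ∀ ψ ∈ B.toSet, LPosForm.Realize M ψ v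

/-- Finite local satisfiability of a set of local positive formulas in `T`. -/
def FinLocSat {L : LocalLanguage} (T : Set (PosSentence L)) {α : Type} {σ : α → L.Sorts}
    (Δ : Set (LPosForm L α σ)) : Prop :=
  ∀ Δ₀ ⊆ Δ, Δ₀.Finite →
    ∃ (M : LStructure L) (v : (a : α) → M.Dom (σ a)),
      LocalModel M T ∧ ∀ φ ∈ Δ₀, LPosForm.Realize M φ v

/-- Bounded satisfiability: for some bound `B`, `Γ ∪ B` is finitely locally satisfiable. -/
def BoundedlySat {L : LocalLanguage} (T : Set (PosSentence L)) {α : Type}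
    {σ : α → L.Sorts} (Γ : Set (LPosForm L α σ)) : Prop :=
  ∃ B : VBound L α σ, FinLocSat T (Γ ∪ B.toSet)

/-! ## Π₁-local formulas -/

/-- Dependent `Sum.elim` of valuations. -/
def sval {L : LocalLanguage} {M : LStructure L} {α β : Type} {σ : α → L.Sorts}
    {τ : β → L.Sorts} (v : (a : α) → M.Dom (σ a)) (w : (b : β) → M.Dom (τ b)) :
    (x : α ⊕ β) → M.Dom (Sum.elim σ τ x)
  | .inl a => v a
  | .inr b => w b

/-- A Π₁-local formula: a universally quantified local formula. -/
structure Pi1LForm (L : LocalLanguage) (α : Type) (σ : α → L.Sorts) : Type 1 where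
  n : ℕ
  τ : Fin n → L.Sorts
  matrix : LForm L (α ⊕ Fin n) (Sum.elim σ τ)

def Pi1LForm.Realize {L : LocalLanguage} {α : Type} {σ : α → L.Sorts}
    (φ : Pi1LForm L α σ) (M : LStructure L) (v : (a : α) → M.Dom (σ a)) : Prop :=
  ∀ w : (i : Fin φ.n) → M.Dom (φ.τ i), φ.matrix.Realize M (sval v w)

/-- Bounded satisfiability of a set of Π₁-local formulas: for some bound `B`, every
finite subset of `Γ` together with every finite part of `B` is realized in a local
model of `T`. -/
def Pi1BoundedlySat {L : LocalLanguage} (T : Set (PosSentence L)) {α : Type}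
    {σ : α → L.Sorts} (Γ : Set (Pi1LForm L α σ)) : Prop :=
  ∃ B : VBound L α σ,
    ∀ Γ₀ ⊆ Γ, Γ₀.Finite → ∀ F ⊆ B.toSet, F.Finite →
      ∃ (M : LStructure L) (v : (a : α) → M.Dom (σ a)),
        LocalModel M T ∧ (∀ φ ∈ Γ₀, Pi1LForm.Realize φ M v) ∧
          (∀ ψ ∈ F, LPosForm.Realize M ψ v)

/-! ## Cardinality, homogeneity, retractors -/

/-- The cardinality of a structure: that of the disjoint union of its sorts. -/
def LStructure.card {L : LocalLanguage} (M : LStructure L) : Cardinal :=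
  Cardinal.mk (Σ s : L.Sorts, M.Dom s)

/-- The cardinality of a local language. -/
def LocalLanguage.card (L : LocalLanguage) : Cardinal :=
  max Cardinal.aleph0
    (Cardinal.mk (L.Sorts ⊕ (Σ s : L.Sorts, L.Const s) ⊕ (Σ s : L.Sorts, L.Loc s) ⊕
      (Σ (n : ℕ) (ρ : Fin n → L.Sorts), L.Rel n ρ)))

/-- `M` is a (local positively) κ-ultrahomogeneous model of `T`. -/
def IsUltrahomogeneous {L : LocalLanguage} (T : Set (PosSentence L)) (M : LStructure L)
    (κ : Cardinal) : Prop :=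
  ∀ A B : LStructure L, LocalModel A T → LocalModel B T → A.card < κ → B.card < κ →
    ∀ f : LHom A M, f.IsPosEmbedding → ∀ g : LHom A B, ∃ h : LHom B M, h.comp g = f

/-- A retractor of `T`: a local model of `T` such that every homomorphism into a local
model of `T` has a retraction. -/
def IsRetractor {L : LocalLanguage} (T : Set (PosSentence L)) (C : LStructure L) : Prop :=
  LocalModel C T ∧
    ∀ N : LStructure L, LocalModel N T →
      ∀ f : LHom C N, ∃ g : LHom N C, g.comp f = LHom.id C

/-- `M` is κ-universal for a class `K` of structures. -/
def IsUniversal {L : LocalLanguage} (M : LStructure L) (K : LStructure L → Prop)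
    (κ : Cardinal) : Prop :=
  ∀ N : LStructure L, K N → N.card < κ → Nonempty (LHom N M)

/-- `M` is absolutely universal for a class `K` of structures. -/
def IsAbsUniversal {L : LocalLanguage} (M : LStructure L) (K : LStructure L → Prop) : Prop :=
  ∀ N : LStructure L, K N → Nonempty (LHom N M)

/-- Compatibility of two local models of `T`. -/
def Compat {L : LocalLanguage} (T : Set (PosSentence L)) (A B : LStructure L) : Prop :=
  ∃ M : LStructure L, LocalModel M T ∧ Nonempty (LHom A M) ∧ Nonempty (LHom B M)

/-- The local joint (homomorphism) property. -/
def HasLJP {L : LocalLanguage} (T : Set (PosSentence L)) : Prop :=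
  ∀ A B : LStructure L, LocalModel A T → LocalModel B T →
    ∃ M : LStructure L, LocalModel M T ∧ Nonempty (LHom A M) ∧ Nonempty (LHom B M)


/-! ## Parameters -/

/-- A set of parameters in a structure. -/
def ParamSet {L : LocalLanguage} (M : LStructure L) := (s : L.Sorts) → Set (M.Dom s)

/-- Interpretation in `M` of old and new constants of the expanded language. -/
def paramInterp {L : LocalLanguage} (M : LStructure L) (A : ParamSet M) {s : L.Sorts} :
    L.Const s ⊕ (A s) → M.Dom s
  | .inl c => M.constMap c
  | .inr a => a.1

/-- The expansion `L(A)` of `L` by new constants for the parameters `A` of a local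
structure `M`; bounds for pairs involving the new constants are chosen (by locality
axiom (A5)) so that they hold in `M`. -/
noncomputable def LocalLanguage.withParams (L : LocalLanguage) (M : LStructure L)
    (hM : IsLocal M) (A : ParamSet M) : LocalLanguage where
  Sorts := L.Sorts
  Rel := L.Rel
  Const s := L.Const s ⊕ (A s)
  Loc := L.Loc
  locToRel := L.locToRel
  dd0 := L.dd0
  locMul := L.locMul
  locLe := L.locLe
  locMul_assoc := L.locMul_assoc
  dd0_locMul := L.dd0_locMul
  locMul_dd0 := L.locMul_dd0
  locLe_refl := L.locLe_refl
  locLe_trans := L.locLe_trans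
  locLe_antisymm := L.locLe_antisymm
  dd0_locLe := L.dd0_locLe
  locMul_mono := L.locMul_mono
  bound := fun {_s} c₁ c₂ =>
    match c₁, c₂ with
    | .inl c₁, .inl c₂ => L.bound c₁ c₂
    | c₁, c₂ => Classical.choose (hM.total (paramInterp M A c₁) (paramInterp M A c₂))

/-- The natural expansion `M_A` of `M` to an `L(A)`-structure. -/
noncomputable def LStructure.withParams {L : LocalLanguage} (M : LStructure L)
    (hM : IsLocal M) (A : ParamSet M) : LStructure (L.withParams M hM A) where
  Dom := M.Dom
  relMap := M.relMap
  constMap := paramInterp M A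

/-- `M` has the local joint property over `A`: any two local models of `Th₋(M/A)` map
into a common local model of `Th₋(M/A)`. -/
def HasLJPOver {L : LocalLanguage} (M : LStructure L) (hM : IsLocal M) (A : ParamSet M) :
    Prop :=
  HasLJP (ThNeg (M.withParams hM A))

/-- `M` is (local positively) κ-saturated: it realizes every local positive type of
`Th₋(M/A)` on `x` whenever `|x| < κ`, `|A| < κ` and `M` has the local joint property
over `A`. -/
def IsSaturatedAt {L : LocalLanguage} (M : LStructure L) (hM : IsLocal M)
    (κ : Cardinal) : Prop :=
  ∀ A : ParamSet M, Cardinal.mk (Σ s : L.Sorts, A s) < κ → HasLJPOver M hM A →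
    ∀ (α : Type) (σ : α → L.Sorts), Cardinal.mk α < κ →
      ∀ Γ : Set (LPosForm (L.withParams M hM A) α σ),
        IsLType (ThNeg (M.withParams hM A)) Γ →
          ∃ v : (a : α) → M.Dom (σ a), ∀ φ ∈ Γ, LPosForm.Realize (M.withParams hM A) φ v

/-- The local positive type of a tuple over a set of parameters `A`, rendered as the set
of local positive formulas with extra free variables for the parameters of `A` that are
satisfied when those variables are evaluated at the parameters themselves. -/
def ltpOver {L : LocalLanguage} (M : LStructure L) (A : ParamSet M) {α : Type}
    {σ : α → L.Sorts} (v : (a : α) → M.Dom (σ a)) :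
    Set (LPosForm L (α ⊕ Σ s : L.Sorts, A s) (Sum.elim σ (fun p => p.1))) :=
  {φ | φ.Realize M (sval v (fun p => p.2.1))}

/-! ## Substructures -/

/-- A substructure of `M`: a family of subsets closed under the constants (the language
is relational). -/
structure Substruct {L : LocalLanguage} (M : LStructure L) where
  carrier : (s : L.Sorts) → Set (M.Dom s)
  const_mem : ∀ {s : L.Sorts} (c : L.Const s), M.constMap c ∈ carrier s

/-- The induced structure on a substructure. -/
def Substruct.toStruct {L : LocalLanguage} {M : LStructure L} (A : Substruct M) :
    LStructure L where
  Dom s := A.carrier s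
  relMap R x := M.relMap R (fun i => (x i).1)
  constMap c := ⟨M.constMap c, A.const_mem c⟩


/-! ## Topologies -/

/-- The `d`-ball at `a`. -/
def LStructure.ball {L : LocalLanguage} (M : LStructure L) {s : L.Sorts} (d : L.Loc s)
    (a : M.Dom s) : Set (M.Dom s) :=
  {b | M.locRel d a b}

/-- The local positive logic topology on a single sort of `M`: closed sets are the
subsets defined by sets of local positive formulas with parameters in `M` (parameters
being rendered as extra free variables evaluated at themselves). -/
def lpTopologyS {L : LocalLanguage} (M : LStructure L) (s : L.Sorts) :
    TopologicalSpace (M.Dom s) :=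
  TopologicalSpace.generateFrom
    {U | ∃ φ : LPosForm L (Unit ⊕ Σ s' : L.Sorts, M.Dom s')
            (Sum.elim (fun _ => s) (fun p => p.1)),
      U = {x | ¬ LPosForm.Realize M φ (sval (fun _ => x) (fun p => p.2))}}

/-- The space of local positive types of `T` on the variable `(α, σ)`. -/
def LTypeSpace (L : LocalLanguage) (T : Set (PosSentence L)) (α : Type)
    (σ : α → L.Sorts) :=
  {Γ : Set (LPosForm L α σ) // IsLType T Γ}

/-- The local positive logic topology on the space of local positive types: generated by
declaring `⟨φ⟩ = {p : φ ∈ p}` closed for every local positive formula `φ`; its closed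
sets are then exactly the sets `⟨Γ⟩` together with `∅`. -/
instance {L : LocalLanguage} (T : Set (PosSentence L)) (α : Type) (σ : α → L.Sorts) :
    TopologicalSpace (LTypeSpace L T α σ) :=
  TopologicalSpace.generateFrom
    {U | ∃ φ : LPosForm L α σ, U = {p : LTypeSpace L T α σ | φ ∉ p.1}}

/-! ## Completeness and compactness -/

/-- `T` is complete: `T = Th₋(M)` for every local positively closed model `M` of `T`. -/
def IsCompleteTheory {L : LocalLanguage} (T : Set (PosSentence L)) : Prop :=
  ∀ M : LStructure L, IsPC M T → ThNeg M = T

/-- `T` is local positively compact. -/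
def IsLocPosCompact {L : LocalLanguage} (T : Set (PosSentence L)) : Prop :=
  ∀ (s : L.Sorts) (γ : Type), Finite γ →
    ∀ (τ : γ → L.Sorts) (φ : LPosForm L (Fin 2 ⊕ γ) (Sum.elim (fun _ => s) τ)),
      (∀ M : LStructure L, LocalModel M T →
        ∀ (a : M.Dom s) (w : (j : γ) → M.Dom (τ j)),
          ¬ LPosForm.Realize M φ (sval ![a, a] w)) →
      ∀ (B : VBound L (Unit ⊕ γ) (Sum.elim (fun _ => s) τ)) (d : L.Loc s),
        ∃ k : ℕ, 0 < k ∧ ∀ M : LStructure L, LocalModel M T →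
          ¬ ∃ (a : Fin k → M.Dom s) (w : (j : γ) → M.Dom (τ j)),
            ∀ i j : Fin k, i ≠ j →
              B.Holds M (sval (fun _ => a i) w) ∧ M.locRel d (a i) (a j) ∧
                LPosForm.Realize M φ (sval ![a i, a j] w)


section Stmt0
variable {L : LocalLanguage}

lemma realize_tpair {M : LStructure L} {α : Type} {σ : α → L.Sorts}
    (v : (a : α) → M.Dom (σ a)) {s t : L.Sorts}
    (t₁ : LTerm L α σ s) (t₂ : LTerm L α σ t) :
    (fun i => LTerm.realize M v (tpair t₁ t₂ i))
      = dpair (t₁.realize M v) (t₂.realize M v) := by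
  funext i
  match i with
  | ⟨0, _⟩ => rfl
  | ⟨1, _⟩ => rfl

lemma realize_castTerm {M : LStructure L} {α : Type} {σ : α → L.Sorts}
    (v : (a : α) → M.Dom (σ a)) {s s' : L.Sorts} (e : s = s') (t : LTerm L α σ s) :
    LTerm.realize M v (e ▸ t) = e ▸ LTerm.realize M v t := by
  cases e; rfl

section Ultra
variable {I : Type} (U : Ultrafilter I) (MM : I → LStructure L)

def uSetoid (s : L.Sorts) : Setoid (∀ i, (MM i).Dom s) where
  r x y := {i | x i = y i} ∈ U
  iseqv := by
    refine ⟨fun x => ?_, fun {x y} h => ?_, fun {x y z} h1 h2 => ?_⟩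
    · have : {i | x i = x i} = Set.univ := by ext i; simp
      rw [this]; exact Filter.univ_mem
    · simpa [eq_comm] using h
    · filter_upwards [h1, h2] with i e1 e2 using e1.trans e2

def uStr : LStructure L where
  Dom s := Quotient (uSetoid U MM s)
  relMap R x := {i | (MM i).relMap R fun k => (x k).out i} ∈ U
  constMap c := Quotient.mk _ (fun i => (MM i).constMap c)

lemma out_ae (s : L.Sorts) (x : ∀ i, (MM i).Dom s) :
    {i | (Quotient.mk (uSetoid U MM s) x).out i = x i} ∈ U :=
  Quotient.exact ((Quotient.mk (uSetoid U MM s) x).out_eq)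

lemma relMap_mk {n : ℕ} {ρ : Fin n → L.Sorts} (R : L.Rel n ρ)
    (x : ∀ k, ∀ i, (MM i).Dom (ρ k)) :
    (uStr U MM).relMap R (fun k => Quotient.mk _ (x k)) ↔
      {i | (MM i).relMap R (fun k => x k i)} ∈ U := by
  have key : {i | ∀ k, (Quotient.mk (uSetoid U MM (ρ k)) (x k)).out i = x k i} ∈ U := by
    have h := fun k => out_ae U MM (ρ k) (x k)
    have : (⋂ k, {i | (Quotient.mk (uSetoid U MM (ρ k)) (x k)).out i = x k i}) ∈ U :=
      (Filter.iInter_mem).2 h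
    simpa [Set.iInter_setOf] using this
  constructor
  · intro h
    filter_upwards [key, h] with i hk hr
    exact (funext hk : (fun k => (Quotient.mk (uSetoid U MM (ρ k)) (x k)).out i) = fun k => x k i) ▸ hr
  · intro h
    show _ ∈ U
    filter_upwards [key, h] with i hk hr
    exact (funext hk : (fun k => (Quotient.mk (uSetoid U MM (ρ k)) (x k)).out i) = fun k => x k i).symm ▸ hr


lemma term_mk {α : Type} {σ : α → L.Sorts} (v : ∀ a, ∀ i, (MM i).Dom (σ a))
    {s : L.Sorts} (t : LTerm L α σ s) :
    LTerm.realize (uStr U MM) (fun a => Quotient.mk _ (v a)) t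
      = Quotient.mk _ (fun i => LTerm.realize (MM i) (fun a => v a i) t) := by
  cases t <;> rfl

lemma locRel_mk {s : L.Sorts} (d : L.Loc s) (x y : ∀ i, (MM i).Dom s) :
    (uStr U MM).locRel d (Quotient.mk _ x) (Quotient.mk _ y) ↔
      {i | (MM i).locRel d (x i) (y i)} ∈ U := by
  have e1 : (dpair (Quotient.mk (uSetoid U MM s) x) (Quotient.mk (uSetoid U MM s) y)
      : (k : Fin 2) → (uStr U MM).Dom (![s, s] k))
      = fun k => Quotient.mk _ ((dpair x y : (k : Fin 2) → ∀ i, (MM i).Dom (![s, s] k)) k) := by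
    funext k
    match k with
    | ⟨0, _⟩ => rfl
    | ⟨1, _⟩ => rfl
  show (uStr U MM).relMap (L.locToRel d) _ ↔ _
  rw [e1, relMap_mk]
  have e2 : ∀ i, (fun k => (dpair x y : (k : Fin 2) → ∀ i, (MM i).Dom (![s, s] k)) k i)
      = (dpair (x i) (y i) : (k : Fin 2) → (MM i).Dom (![s, s] k)) := by
    intro i
    funext k
    match k with
    | ⟨0, _⟩ => rfl
    | ⟨1, _⟩ => rfl
  constructor
  · intro h; filter_upwards [h] with i hi
    show (MM i).relMap (L.locToRel d) (dpair (x i) (y i))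
    rw [← e2 i]; exact hi
  · intro h; filter_upwards [h] with i hi
    show (MM i).relMap (L.locToRel d)
      (fun k => (dpair x y : (k : Fin 2) → ∀ i, (MM i).Dom (![s, s] k)) k i)
    rw [e2 i]; exact hi


theorem los_lform : ∀ {α : Type} {σ : α → L.Sorts} (φ : LForm L α σ)
    (v : ∀ a, ∀ i, (MM i).Dom (σ a)),
    LForm.Realize (uStr U MM) φ (fun a => Quotient.mk _ (v a)) ↔
      {i | LForm.Realize (MM i) φ (fun a => v a i)} ∈ U := by
  intro α σ φ
  induction φ with
  | rel R ts =>
    intro v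
    show (uStr U MM).relMap R _ ↔ _
    have e : (fun k => LTerm.realize (uStr U MM) (fun a => Quotient.mk _ (v a)) (ts k))
        = fun k => Quotient.mk _ (fun i => LTerm.realize (MM i) (fun a => v a i) (ts k)) := by
      funext k; exact term_mk U MM v (ts k)
    rw [e, relMap_mk]
    exact Iff.rfl
  | not φ ih =>
    intro v
    show ¬ _ ↔ _
    rw [ih v]
    exact (Ultrafilter.eventually_not (f := U)).symm
  | and φ ψ ihφ ihψ =>
    intro v
    show (_ ∧ _) ↔ _
    rw [ihφ v, ihψ v]
    exact (Filter.eventually_and).symm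
  | lex s d t φ ih =>
    intro v
    constructor
    · rintro ⟨X, hloc, hφ⟩
      obtain ⟨x, rfl⟩ := X.exists_rep
      rw [term_mk, locRel_mk] at hloc
      have hv : vcons (M := uStr U MM) (Quotient.mk _ x) (fun a => Quotient.mk _ (v a))
          = fun o => Quotient.mk _
              (fun i => vcons (M := MM i) (x i) (fun a => v a i) o) := by
        funext o; cases o <;> rfl
      rw [hv, ih] at hφ
      filter_upwards [hloc, hφ] with i h1 h2
      exact ⟨x i, h1, h2⟩
    · intro hS
      classical
      set tv : ∀ i, (MM i).Dom s := fun i => LTerm.realize (MM i) (fun a => v a i) t with htv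
      have htot : ∀ i, ∃ xi : (MM i).Dom s,
          (∃ yi, (MM i).locRel d yi (tv i) ∧
              LForm.Realize (MM i) φ (vcons yi (fun a => v a i))) →
            ((MM i).locRel d xi (tv i) ∧
              LForm.Realize (MM i) φ (vcons xi (fun a => v a i))) := by
        intro i
        by_cases h : ∃ yi, (MM i).locRel d yi (tv i) ∧
            LForm.Realize (MM i) φ (vcons yi (fun a => v a i))
        · exact ⟨h.choose, fun _ => h.choose_spec⟩
        · exact ⟨tv i, fun hc => absurd hc h⟩
      choose x hx using htot
      have h1 : {i | (MM i).locRel d (x i) (tv i)} ∈ U := by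
        filter_upwards [hS] with i hi
        exact (hx i hi).1
      have h2 : {i | LForm.Realize (MM i) φ (vcons (x i) (fun a => v a i))} ∈ U := by
        filter_upwards [hS] with i hi
        exact (hx i hi).2
      refine ⟨Quotient.mk _ x, ?_, ?_⟩
      · rw [term_mk, locRel_mk]; exact h1
      · have hv : vcons (M := uStr U MM) (Quotient.mk _ x) (fun a => Quotient.mk _ (v a))
            = fun o => Quotient.mk _
                (fun i => vcons (M := MM i) (x i) (fun a => v a i) o) := by
          funext o; cases o <;> rfl
        rw [hv, ih]
        exact h2

theorem los_posform : ∀ {α : Type} {σ : α → L.Sorts} (φ : PosForm L α σ)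
    (v : ∀ a, ∀ i, (MM i).Dom (σ a)),
    PosForm.Realize (uStr U MM) φ (fun a => Quotient.mk _ (v a)) →
      {i | PosForm.Realize (MM i) φ (fun a => v a i)} ∈ U := by
  intro α σ φ
  induction φ with
  | rel R ts =>
    intro v h
    have e : (fun k => LTerm.realize (uStr U MM) (fun a => Quotient.mk _ (v a)) (ts k))
        = fun k => Quotient.mk _ (fun i => LTerm.realize (MM i) (fun a => v a i) (ts k)) := by
      funext k; exact term_mk U MM v (ts k)
    have h' : (uStr U MM).relMap R _ := h
    rw [e, relMap_mk] at h'
    exact h'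
  | and φ ψ ihφ ihψ =>
    intro v h
    filter_upwards [ihφ v h.1, ihψ v h.2] with i hh1 hh2
    exact ⟨hh1, hh2⟩
  | or φ ψ ihφ ihψ =>
    intro v h
    rcases h with h | h
    · filter_upwards [ihφ v h] with i hi using Or.inl hi
    · filter_upwards [ihψ v h] with i hi using Or.inr hi
  | ex s φ ih =>
    rintro v ⟨X, hφ⟩
    obtain ⟨x, rfl⟩ := X.exists_rep
    have hv : vcons (M := uStr U MM) (Quotient.mk _ x) (fun a => Quotient.mk _ (v a))
        = fun o => Quotient.mk _
            (fun i => vcons (M := MM i) (x i) (fun a => v a i) o) := by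
      funext o; cases o <;> rfl
    rw [hv] at hφ
    filter_upwards [ih _ hφ] with i hi
    exact ⟨x i, hi⟩


lemma u_symm (hLoc : ∀ i, IsLocal (MM i)) {s : L.Sorts} (d : L.Loc s) (a b : (uStr U MM).Dom s) :
    (uStr U MM).locRel d a b → (uStr U MM).locRel d b a := by
  obtain ⟨x, rfl⟩ := a.exists_rep
  obtain ⟨y, rfl⟩ := b.exists_rep
  rw [locRel_mk, locRel_mk]
  intro h
  filter_upwards [h] with i hi using (hLoc i).symm d _ _ hi

lemma u_mono (hLoc : ∀ i, IsLocal (MM i)) {s : L.Sorts} (d₁ d₂ : L.Loc s) (hd : L.locLe d₁ d₂)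
    (a b : (uStr U MM).Dom s) :
    (uStr U MM).locRel d₁ a b → (uStr U MM).locRel d₂ a b := by
  obtain ⟨x, rfl⟩ := a.exists_rep
  obtain ⟨y, rfl⟩ := b.exists_rep
  rw [locRel_mk, locRel_mk]
  intro h
  filter_upwards [h] with i hi using (hLoc i).mono d₁ d₂ hd _ _ hi

lemma u_comp (hLoc : ∀ i, IsLocal (MM i)) {s : L.Sorts} (d₁ d₂ : L.Loc s) (a b c : (uStr U MM).Dom s) :
    (uStr U MM).locRel d₁ a b → (uStr U MM).locRel d₂ b c →
      (uStr U MM).locRel (L.locMul d₁ d₂) a c := by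
  obtain ⟨x, rfl⟩ := a.exists_rep
  obtain ⟨y, rfl⟩ := b.exists_rep
  obtain ⟨z, rfl⟩ := c.exists_rep
  rw [locRel_mk, locRel_mk, locRel_mk]
  intro h1 h2
  filter_upwards [h1, h2] with i hi1 hi2 using (hLoc i).comp d₁ d₂ _ _ _ hi1 hi2

lemma u_dd0 (hLoc : ∀ i, IsLocal (MM i)) {s : L.Sorts} (a b : (uStr U MM).Dom s) :
    (uStr U MM).locRel (L.dd0 s) a b ↔ a = b := by
  obtain ⟨x, rfl⟩ := a.exists_rep
  obtain ⟨y, rfl⟩ := b.exists_rep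
  rw [locRel_mk]
  constructor
  · intro h
    apply Quotient.sound
    show {i | x i = y i} ∈ U
    filter_upwards [h] with i hi using ((hLoc i).dd0_eq _ _).1 hi
  · intro h
    have h' : {i | x i = y i} ∈ U := Quotient.exact h
    filter_upwards [h'] with i hi using ((hLoc i).dd0_eq _ _).2 hi

lemma u_bound (hLoc : ∀ i, IsLocal (MM i)) {s : L.Sorts} (c₁ c₂ : L.Const s) :
    (uStr U MM).locRel (L.bound c₁ c₂) ((uStr U MM).constMap c₁) ((uStr U MM).constMap c₂) := by
  rw [show (uStr U MM).constMap c₁ = Quotient.mk _ (fun i => (MM i).constMap c₁) from rfl,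
    show (uStr U MM).constMap c₂ = Quotient.mk _ (fun i => (MM i).constMap c₂) from rfl,
    locRel_mk]
  filter_upwards with i using (hLoc i).boundAx c₁ c₂

end Ultra

/-! ### The local component of the ultraproduct around the anchors -/

section Comp

variable {I : Type} (U : Ultrafilter I) (MM : I → LStructure L)
variable {α : Type} {σ : α → L.Sorts} (vv : ∀ (a : α) (i : I), (MM i).Dom (σ a))

/-- Anchor points: interpretations of constants and the components of the tuple. -/
def IsAnchor (s : L.Sorts) (y : (uStr U MM).Dom s) : Prop :=
  (∃ c : L.Const s, y = (uStr U MM).constMap c) ∨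
    (∃ (a : α) (e : σ a = s), y = e ▸ Quotient.mk (uSetoid U MM (σ a)) (vv a))

/-- Membership in the local component around the anchors. -/
def inC (s : L.Sorts) (x : (uStr U MM).Dom s) : Prop :=
  ∃ (d : L.Loc s) (y : (uStr U MM).Dom s), IsAnchor U MM vv s y ∧ (uStr U MM).locRel d x y

lemma locRel_castSort {M : LStructure L} {s s' : L.Sorts} (e : s = s') (d : L.Loc s)
    (x y : M.Dom s) : M.locRel (e ▸ d) (e ▸ x) (e ▸ y) ↔ M.locRel d x y := by
  cases e; exact Iff.rfl

lemma constMap_castSort {M : LStructure L} {s s' : L.Sorts} (e : s = s') (c : L.Const s) :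
    (e ▸ M.constMap c : M.Dom s') = M.constMap (e ▸ c) := by
  cases e; rfl

lemma castSort_castSort {s₁ s₂ s₃ : L.Sorts} (C : L.Sorts → Type _)
    (e₁ : s₁ = s₂) (e₂ : s₂ = s₃) (x : C s₁) :
    (e₂ ▸ (e₁ ▸ x : C s₂) : C s₃) = (e₁.trans e₂) ▸ x := by
  cases e₁; cases e₂; rfl


lemma anchor_rel (hLoc : ∀ i, IsLocal (MM i))
    (hvc : ∀ (a : α), Nonempty (L.Const (σ a)) →
      ∃ (d : L.Loc (σ a)) (c : L.Const (σ a)),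
        (uStr U MM).locRel d (Quotient.mk _ (vv a)) ((uStr U MM).constMap c))
    (hvv : ∀ (a b : α) (e : σ a = σ b),
      ∃ d : L.Loc (σ a),
        (uStr U MM).locRel d (Quotient.mk _ (vv a))
          (e.symm ▸ Quotient.mk (uSetoid U MM (σ b)) (vv b)))
    (s : L.Sorts) (y₁ y₂ : (uStr U MM).Dom s)
    (h₁ : IsAnchor U MM vv s y₁) (h₂ : IsAnchor U MM vv s y₂) :
    ∃ d : L.Loc s, (uStr U MM).locRel d y₁ y₂ := by
  have key : ∀ (y : (uStr U MM).Dom s), IsAnchor U MM vv s y →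
      ∀ c : L.Const s, ∃ d : L.Loc s, (uStr U MM).locRel d y ((uStr U MM).constMap c) := by
    rintro y (⟨c', rfl⟩ | ⟨a, e, rfl⟩) c
    · exact ⟨L.bound c' c, u_bound U MM hLoc c' c⟩
    · obtain ⟨d, c', hd⟩ := hvc a ⟨e.symm ▸ c⟩
      have h1 : (uStr U MM).locRel (e ▸ d)
          (e ▸ Quotient.mk (uSetoid U MM (σ a)) (vv a)) ((uStr U MM).constMap (e ▸ c')) := by
        rw [← constMap_castSort (M := uStr U MM) e c']
        exact (locRel_castSort e d _ _).2 hd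
      have h2 := u_bound U MM hLoc (e ▸ c') c
      exact ⟨_, u_comp U MM hLoc _ _ _ _ _ h1 h2⟩
  rcases h₂ with ⟨c, rfl⟩ | ⟨b, e₂, rfl⟩
  · exact key y₁ h₁ c
  · rcases h₁ with ⟨c, rfl⟩ | ⟨a, e₁, rfl⟩
    · obtain ⟨d, hd⟩ := key _ (Or.inr ⟨b, e₂, rfl⟩) c
      exact ⟨d, u_symm U MM hLoc d _ _ hd⟩
    · -- two tuple components
      have e : σ a = σ b := e₁.trans e₂.symm
      obtain ⟨d, hd⟩ := hvv a b e
      refine ⟨e₁ ▸ d, ?_⟩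
      have h1 : (uStr U MM).locRel (e₁ ▸ d)
          (e₁ ▸ Quotient.mk (uSetoid U MM (σ a)) (vv a))
          (e₁ ▸ (e.symm ▸ Quotient.mk (uSetoid U MM (σ b)) (vv b))) :=
        (locRel_castSort e₁ d _ _).2 hd
      have h2 : (e₁ ▸ (e.symm ▸ Quotient.mk (uSetoid U MM (σ b)) (vv b)) :
            (uStr U MM).Dom s)
          = e₂ ▸ Quotient.mk (uSetoid U MM (σ b)) (vv b) := by
        exact castSort_castSort (fun s => (uStr U MM).Dom s) e.symm e₁ _
      rw [← h2]
      exact h1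


lemma const_inC (hLoc : ∀ i, IsLocal (MM i)) {s : L.Sorts} (c : L.Const s) :
    inC U MM vv s ((uStr U MM).constMap c) :=
  ⟨L.dd0 s, (uStr U MM).constMap c, Or.inl ⟨c, rfl⟩,
    (u_dd0 U MM hLoc _ _).2 rfl⟩

lemma vv_inC (hLoc : ∀ i, IsLocal (MM i)) (a : α) :
    inC U MM vv (σ a) (Quotient.mk (uSetoid U MM (σ a)) (vv a)) :=
  ⟨L.dd0 (σ a), _, Or.inr ⟨a, rfl, rfl⟩, (u_dd0 U MM hLoc _ _).2 rfl⟩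

lemma ball_inC (hLoc : ∀ i, IsLocal (MM i)) {s : L.Sorts} {x y : (uStr U MM).Dom s}
    (hx : inC U MM vv s x) (d : L.Loc s) (h : (uStr U MM).locRel d y x) :
    inC U MM vv s y := by
  obtain ⟨d', z, hz, hx'⟩ := hx
  exact ⟨L.locMul d d', z, hz, u_comp U MM hLoc d d' y x z h hx'⟩

/-- The component structure. -/
def cStr (hLoc : ∀ i, IsLocal (MM i)) : LStructure L where
  Dom s := {x : (uStr U MM).Dom s // inC U MM vv s x}
  relMap R x := (uStr U MM).relMap R (fun k => (x k).1)
  constMap c := ⟨(uStr U MM).constMap c, const_inC U MM vv hLoc c⟩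


lemma cStr_locRel (hLoc : ∀ i, IsLocal (MM i)) {s : L.Sorts} (d : L.Loc s)
    (a b : (cStr U MM vv hLoc).Dom s) :
    (cStr U MM vv hLoc).locRel d a b ↔ (uStr U MM).locRel d a.1 b.1 := by
  show (uStr U MM).relMap (L.locToRel d)
      (fun k => ((dpair a b : (k : Fin 2) → (cStr U MM vv hLoc).Dom (![s, s] k)) k).1) ↔ _
  have e : (fun k => ((dpair a b : (k : Fin 2) → (cStr U MM vv hLoc).Dom (![s, s] k)) k).1)
      = (dpair a.1 b.1 : (k : Fin 2) → (uStr U MM).Dom (![s, s] k)) := by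
    funext k
    match k with
    | ⟨0, _⟩ => rfl
    | ⟨1, _⟩ => rfl
  rw [e]
  exact Iff.rfl

lemma cStr_isLocal (hLoc : ∀ i, IsLocal (MM i))
    (hvc : ∀ (a : α), Nonempty (L.Const (σ a)) →
      ∃ (d : L.Loc (σ a)) (c : L.Const (σ a)),
        (uStr U MM).locRel d (Quotient.mk _ (vv a)) ((uStr U MM).constMap c))
    (hvv : ∀ (a b : α) (e : σ a = σ b),
      ∃ d : L.Loc (σ a),
        (uStr U MM).locRel d (Quotient.mk _ (vv a))
          (e.symm ▸ Quotient.mk (uSetoid U MM (σ b)) (vv b))) :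
    IsLocal (cStr U MM vv hLoc) := by
  constructor
  · intro s d a b h
    rw [cStr_locRel] at h ⊢
    exact u_symm U MM hLoc d _ _ h
  · intro s d₁ d₂ hd a b h
    rw [cStr_locRel] at h ⊢
    exact u_mono U MM hLoc d₁ d₂ hd _ _ h
  · intro s d₁ d₂ a b c h1 h2
    rw [cStr_locRel] at h1 h2 ⊢
    exact u_comp U MM hLoc d₁ d₂ _ _ _ h1 h2
  · intro s c₁ c₂
    rw [cStr_locRel]
    exact u_bound U MM hLoc c₁ c₂
  · intro s a b
    obtain ⟨d₁, z₁, hz₁, h₁⟩ := a.2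
    obtain ⟨d₂, z₂, hz₂, h₂⟩ := b.2
    obtain ⟨e, he⟩ := anchor_rel U MM vv hLoc hvc hvv s z₁ z₂ hz₁ hz₂
    refine ⟨L.locMul d₁ (L.locMul e d₂), ?_⟩
    rw [cStr_locRel]
    exact u_comp U MM hLoc _ _ _ _ _ h₁
      (u_comp U MM hLoc _ _ _ _ _ he (u_symm U MM hLoc d₂ _ _ h₂))
  · intro s a b
    rw [cStr_locRel, u_dd0 U MM hLoc]
    exact ⟨Subtype.ext, fun h => congrArg Subtype.val h⟩

lemma cStr_term (hLoc : ∀ i, IsLocal (MM i)) {β : Type} {τ : β → L.Sorts}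
    (w : ∀ b, (cStr U MM vv hLoc).Dom (τ b)) {s : L.Sorts} (t : LTerm L β τ s) :
    LTerm.realize (uStr U MM) (fun b => (w b).1) t
      = (LTerm.realize (cStr U MM vv hLoc) w t).1 := by
  cases t <;> rfl

lemma cStr_rel_iff (hLoc : ∀ i, IsLocal (MM i)) {β : Type} {τ : β → L.Sorts}
    {n : ℕ} {ρ : Fin n → L.Sorts} (R : L.Rel n ρ)
    (ts : (k : Fin n) → LTerm L β τ (ρ k)) (w : ∀ b, (cStr U MM vv hLoc).Dom (τ b)) :
    (cStr U MM vv hLoc).relMap R (fun k => LTerm.realize (cStr U MM vv hLoc) w (ts k)) ↔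
      (uStr U MM).relMap R (fun k => LTerm.realize (uStr U MM) (fun b => (w b).1) (ts k)) := by
  show (uStr U MM).relMap R _ ↔ _
  have e : (fun k => (LTerm.realize (cStr U MM vv hLoc) w (ts k)).1)
      = fun k => LTerm.realize (uStr U MM) (fun b => (w b).1) (ts k) := by
    funext k; exact (cStr_term U MM vv hLoc w (ts k)).symm
  rw [e]

lemma vcons_val (hLoc : ∀ i, IsLocal (MM i)) {β : Type} {τ : β → L.Sorts} {s : L.Sorts}
    (x : (cStr U MM vv hLoc).Dom s) (w : ∀ b, (cStr U MM vv hLoc).Dom (τ b)) :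
    (fun o => (vcons (M := cStr U MM vv hLoc) x w o).1)
      = vcons (M := uStr U MM) x.1 (fun b => (w b).1) := by
  funext o; cases o <;> rfl

lemma pos_up (hLoc : ∀ i, IsLocal (MM i)) :
    ∀ {β : Type} {τ : β → L.Sorts} (φ : PosForm L β τ)
      (w : ∀ b, (cStr U MM vv hLoc).Dom (τ b)),
      φ.Realize (cStr U MM vv hLoc) w → φ.Realize (uStr U MM) (fun b => (w b).1) := by
  intro β τ φ
  induction φ with
  | rel R ts => intro w h; exact (cStr_rel_iff U MM vv hLoc R ts w).1 h
  | and φ ψ ihφ ihψ => exact fun w h => ⟨ihφ w h.1, ihψ w h.2⟩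
  | or φ ψ ihφ ihψ =>
    rintro w (h | h)
    · exact Or.inl (ihφ w h)
    · exact Or.inr (ihψ w h)
  | ex s φ ih =>
    rintro w ⟨x, h⟩
    refine ⟨x.1, ?_⟩
    have := ih (vcons x w) h
    rwa [vcons_val] at this

lemma lf_abs (hLoc : ∀ i, IsLocal (MM i)) :
    ∀ {β : Type} {τ : β → L.Sorts} (φ : LForm L β τ)
      (w : ∀ b, (cStr U MM vv hLoc).Dom (τ b)),
      φ.Realize (cStr U MM vv hLoc) w ↔ φ.Realize (uStr U MM) (fun b => (w b).1) := by
  intro β τ φ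
  induction φ with
  | rel R ts => intro w; exact cStr_rel_iff U MM vv hLoc R ts w
  | not φ ih => intro w; exact not_congr (ih w)
  | and φ ψ ihφ ihψ => intro w; exact and_congr (ihφ w) (ihψ w)
  | lex s d t φ ih =>
    intro w
    constructor
    · rintro ⟨x, hx, h⟩
      refine ⟨x.1, ?_, ?_⟩
      · rw [cStr_locRel] at hx
        rwa [cStr_term] 
      · rw [← vcons_val]
        exact (ih (vcons x w)).1 h
    · rintro ⟨x, hx, h⟩
      have htC : inC U MM vv s (LTerm.realize (uStr U MM) (fun b => (w b).1) t) := by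
        rw [cStr_term U MM vv hLoc w t]
        exact (LTerm.realize (cStr U MM vv hLoc) w t).2
      have hxC := ball_inC U MM vv hLoc htC d hx
      refine ⟨⟨x, hxC⟩, ?_, ?_⟩
      · refine (cStr_locRel U MM vv hLoc d ⟨x, hxC⟩ _).2 ?_
        show (uStr U MM).locRel d x (LTerm.realize (cStr U MM vv hLoc) w t).1
        rw [← cStr_term U MM vv hLoc w t]
        exact hx
      · rw [ih (vcons ⟨x, hxC⟩ w)]
        convert h using 1
        exact vcons_val U MM vv hLoc _ w

end Comp

/-! ### Smallness of the type of local formulas -/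

section Small

variable (L)

/-- Codes for terms. -/
abbrev TCode (β : Type) : Type := (β ⊕ ℕ) ⊕ (Σ s : L.Sorts, L.Const s)

/-- Codes for local formulas. -/
inductive FCode (β : Type) : Type where
  | rel (n : ℕ) (ρ : Fin n → L.Sorts) (R : L.Rel n ρ) (ts : (k : Fin n) → TCode L β)
  | not (c : FCode β)
  | and (c₁ c₂ : FCode β)
  | lex (s : L.Sorts) (d : L.Loc s) (t : TCode L β) (c : FCode β)

variable {L}

def tenc {β γ : Type} {τ : γ → L.Sorts} (f : γ → β ⊕ ℕ) :
    {s : L.Sorts} → LTerm L γ τ s → TCode L β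
  | _, .var a => .inl (f a)
  | s, .const c => .inr ⟨s, c⟩

def liftv {β γ : Type} (f : γ → β ⊕ ℕ) : Option γ → β ⊕ ℕ
  | none => .inr 0
  | some a => Sum.map id Nat.succ (f a)

def liftinv {β γ : Type} (finv : β ⊕ ℕ → Option γ) : β ⊕ ℕ → Option (Option γ)
  | .inr 0 => some none
  | .inr (n+1) => (finv (.inr n)).map some
  | .inl b => (finv (.inl b)).map some

def fenc {β : Type} : {γ : Type} → {τ : γ → L.Sorts} → (γ → β ⊕ ℕ) →
    LForm L γ τ → FCode L β
  | _, _, f, .rel (n := n) (ρ := ρ) R ts => .rel n ρ R (fun k => tenc f (ts k))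
  | _, _, f, .not φ => .not (fenc f φ)
  | _, _, f, .and φ ψ => .and (fenc f φ) (fenc f ψ)
  | _, _, f, .lex s d t φ => .lex s d (tenc f t) (fenc (liftv f) φ)

def tdec {β γ : Type} (τ : γ → L.Sorts) (finv : β ⊕ ℕ → Option γ) :
    TCode L β → Option (Σ s : L.Sorts, LTerm L γ τ s)
  | .inl x => (finv x).map (fun a => ⟨τ a, .var a⟩)
  | .inr ⟨s, c⟩ => some ⟨s, .const c⟩

open Classical in
def tdecS {β γ : Type} (τ : γ → L.Sorts) (finv : β ⊕ ℕ → Option γ) (s : L.Sorts)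
    (x : TCode L β) : Option (LTerm L γ τ s) :=
  match tdec τ finv x with
  | none => none
  | some ⟨s', t⟩ => if h : s' = s then some (h ▸ t) else none

open Classical in
def fdec {β : Type} : {γ : Type} → (τ : γ → L.Sorts) → (β ⊕ ℕ → Option γ) →
    FCode L β → Option (LForm L γ τ)
  | _, τ, finv, .rel _ ρ R ts =>
    if h : ∀ k, (tdecS τ finv (ρ k) (ts k)).isSome then
      some (.rel R (fun k => (tdecS τ finv (ρ k) (ts k)).get (h k)))
    else none
  | _, τ, finv, .not c => (fdec τ finv c).map .not
  | _, τ, finv, .and c₁ c₂ =>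
    match fdec τ finv c₁, fdec τ finv c₂ with
    | some φ, some ψ => some (.and φ ψ)
    | _, _ => none
  | _, τ, finv, .lex s d tc c =>
    match tdecS τ finv s tc, fdec (osort s τ) (liftinv finv) c with
    | some t, some φ => some (.lex s d t φ)
    | _, _ => none

lemma liftinv_liftv {β γ : Type} (f : γ → β ⊕ ℕ) (finv : β ⊕ ℕ → Option γ)
    (h : ∀ a, finv (f a) = some a) : ∀ o, liftinv finv (liftv f o) = some o := by
  rintro (_ | a)
  · rfl
  · have ha := h a
    cases hfa : f a with
    | inl b => rw [hfa] at ha; simp [liftv, hfa, liftinv, ha]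
    | inr n => rw [hfa] at ha; simp [liftv, hfa, liftinv, ha]

lemma tdec_tenc {β γ : Type} (τ : γ → L.Sorts) (f : γ → β ⊕ ℕ)
    (finv : β ⊕ ℕ → Option γ) (h : ∀ a, finv (f a) = some a) {s : L.Sorts}
    (t : LTerm L γ τ s) : tdec τ finv (tenc f t) = some ⟨s, t⟩ := by
  cases t with
  | var a => simp [tenc, tdec, h a]
  | const c => rfl

lemma tdecS_tenc {β γ : Type} (τ : γ → L.Sorts) (f : γ → β ⊕ ℕ)
    (finv : β ⊕ ℕ → Option γ) (h : ∀ a, finv (f a) = some a) {s : L.Sorts}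
    (t : LTerm L γ τ s) : tdecS τ finv s (tenc f t) = some t := by
  unfold tdecS
  rw [tdec_tenc τ f finv h t]
  exact dif_pos rfl

lemma fdec_fenc {β : Type} : ∀ {γ : Type} {τ : γ → L.Sorts} (φ : LForm L γ τ)
    (f : γ → β ⊕ ℕ) (finv : β ⊕ ℕ → Option γ) (h : ∀ a, finv (f a) = some a),
    fdec τ finv (fenc f φ) = some φ := by
  intro γ τ φ
  induction φ with
  | rel R ts =>
    intro f finv h
    simp only [fenc, fdec]
    rw [dif_pos]
    · congr 1
      congr 1
      funext k
      simp [tdecS_tenc _ f finv h (ts k)]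
    · intro k
      simp [tdecS_tenc _ f finv h (ts k)]
  | not φ ih =>
    intro f finv h
    simp only [fenc, fdec, ih f finv h, Option.map_some]
  | and φ ψ ihφ ihψ =>
    intro f finv h
    simp only [fenc, fdec, ihφ f finv h, ihψ f finv h]
  | lex s d t φ ih =>
    intro f finv h
    simp only [fenc, fdec, tdecS_tenc _ f finv h t,
      ih (liftv f) (liftinv finv) (liftinv_liftv f finv h)]

lemma small_lform (β : Type) (τ : β → L.Sorts) : Small.{0} (LForm L β τ) := by
  set finv₀ : β ⊕ ℕ → Option β := fun x => match x with
    | .inl b => some b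
    | .inr _ => none with hfinv
  have hsurj : Function.Surjective (fun x : FCode L β ⊕ Unit =>
      match x with
      | .inl c => fdec τ finv₀ c
      | .inr _ => (none : Option (LForm L β τ))) := by
    rintro (_ | φ)
    · exact ⟨.inr (), rfl⟩
    · exact ⟨.inl (fenc Sum.inl φ), fdec_fenc φ Sum.inl finv₀ (fun a => rfl)⟩
  haveI : Small.{0} (Option (LForm L β τ)) := small_of_surjective hsurj
  exact small_of_injective (Option.some_injective _)

lemma small_pi1 {α : Type} (σ : α → L.Sorts) : Small.{0} (Pi1LForm L α σ) := by
  set finv₀ : ∀ n : ℕ, (α ⊕ Fin n) ⊕ ℕ → Option (α ⊕ Fin n) := fun n x => match x with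
    | .inl b => some b
    | .inr _ => none with hfinv
  have hsurj : Function.Surjective
      (fun x : (Σ n : ℕ, ((Fin n → L.Sorts) × FCode L (α ⊕ Fin n))) ⊕ Unit =>
      match x with
      | .inl ⟨n, τ, c⟩ => (fdec (Sum.elim σ τ) (finv₀ n) c).map
          (fun m => (⟨n, τ, m⟩ : Pi1LForm L α σ))
      | .inr _ => (none : Option (Pi1LForm L α σ))) := by
    rintro (_ | ⟨n, τ, m⟩)
    · exact ⟨.inr (), rfl⟩
    · refine ⟨.inl ⟨n, τ, fenc Sum.inl m⟩, ?_⟩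
      simp only [fdec_fenc m Sum.inl (finv₀ n) (fun a => rfl), Option.map_some]
  haveI : Small.{0} (Option (Pi1LForm L α σ)) := small_of_surjective hsurj
  exact small_of_injective (Option.some_injective _)

end Small

section Ultra2
variable {I : Type} (U : Ultrafilter I) (MM : I → LStructure L)

lemma mk_castSort {s s' : L.Sorts} (e : s = s') (x : ∀ i, (MM i).Dom s) :
    (e ▸ Quotient.mk (uSetoid U MM s) x : (uStr U MM).Dom s')
      = Quotient.mk (uSetoid U MM s') (fun i => e ▸ x i) := by
  cases e; rfl

end Ultra2
end Stmt0

/-- For a locally satisfiable negative local theory `T` and a set `Γ`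
of Π₁-local formulas on the variable `(α, σ)`, `Γ` is locally satisfiable in `T` iff it
is boundedly satisfiable in `T`. -/
theorem locally_satisfiable_iff_boundedly_satisfiable
    {L : LocalLanguage} (T : Set (PosSentence L))
    (hT : IsNegLocalTheory T) (hsat : LocSat T)
    (α : Type) (σ : α → L.Sorts) (Γ : Set (Pi1LForm L α σ)) :
    (∃ (M : LStructure L) (v : (a : α) → M.Dom (σ a)),
        LocalModel M T ∧ ∀ φ ∈ Γ, Pi1LForm.Realize φ M v) ↔
      Pi1BoundedlySat T Γ := by
  constructor
  · rintro ⟨M, v, hM, hΓ⟩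
    refine ⟨⟨fun a h => Classical.choose (hM.1.total (v a) (M.constMap (Classical.choice h))),
      fun a h => Classical.choice h,
      fun a b e => Classical.choose (hM.1.total (v a) (e.symm ▸ v b))⟩, ?_⟩
    intro Γ₀ hΓ₀ _ F hF _
    refine ⟨M, v, hM, fun φ hφ => hΓ φ (hΓ₀ hφ), ?_⟩
    rintro ψ hψ
    rcases hF hψ with ⟨a, h, rfl⟩ | ⟨a, b, e, rfl⟩
    · show M.relMap _ _
      rw [realize_tpair]
      show M.relMap _ (dpair (C := fun i => M.Dom (![σ a, σ a] i)) (v a) (M.constMap (Classical.choice h)))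
      exact Classical.choose_spec (hM.1.total (v a) (M.constMap (Classical.choice h)))
    · show M.relMap _ _
      rw [realize_tpair]
      show M.relMap _ (dpair (C := fun i => M.Dom (![σ a, σ a] i)) (v a) (LTerm.realize M v (e.symm ▸ LTerm.var b : LTerm L α σ (σ a))))
      have key : LTerm.realize M v (e.symm ▸ LTerm.var b : LTerm L α σ (σ a)) = e.symm ▸ v b :=
        realize_castTerm v e.symm (LTerm.var b)
      exact (congrArg (fun X => M.relMap (L.locToRel _)
        (dpair (C := fun i => M.Dom (![σ a, σ a] i)) (v a) X)) key).mpr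
        (Classical.choose_spec (hM.1.total (v a) (e.symm ▸ v b)))
  · rintro ⟨B, hB⟩
    classical
    haveI hsΓty : Small.{0} (Pi1LForm L α σ) := small_pi1 σ
    haveI hsΓ : Small.{0} ↥Γ :=
      small_of_injective (Subtype.val_injective (p := fun x => x ∈ Γ))
    haveI hsB : Small.{0} ↥(B.toSet) := by
      have hsurj : Function.Surjective
          (fun x : (Σ' (a : α), Nonempty (L.Const (σ a))) ⊕
              (Σ' (a : α) (b : α), σ a = σ b) => match x with
            | .inl ⟨a, h⟩ => (⟨LPosForm.rel (L.locToRel (B.dConst a h))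
                (tpair (LTerm.var a) (LTerm.const (B.cConst a h))),
                Or.inl ⟨a, h, rfl⟩⟩ : ↥(B.toSet))
            | .inr ⟨a, b, e⟩ => (⟨LPosForm.rel (L.locToRel (B.dPair a b e))
                (tpair (LTerm.var a) (e.symm ▸ LTerm.var b)),
                Or.inr ⟨a, b, e, rfl⟩⟩ : ↥(B.toSet))) := by
        rintro ⟨ψ, hψ⟩
        rcases hψ with ⟨a, h, rfl⟩ | ⟨a, b, e, rfl⟩
        · exact ⟨.inl ⟨a, h⟩, rfl⟩
        · exact ⟨.inr ⟨a, b, e⟩, rfl⟩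
      exact small_of_surjective hsurj
    set γ0 := Shrink ↥Γ with hγ0
    set β0 := Shrink ↥(B.toSet) with hβ0
    set eγ := equivShrink ↥Γ with heγ
    set eβ := equivShrink ↥(B.toSet) with heβ
    haveI : Nonempty (Finset γ0 × Finset β0) := ⟨(∅, ∅)⟩
    set U : Ultrafilter (Finset γ0 × Finset β0) := Ultrafilter.of Filter.atTop with hUdef
    have hU : ∀ (s : Set (Finset γ0 × Finset β0)), s ∈ (Filter.atTop : Filter _) → s ∈ U :=
      fun s hs => Ultrafilter.of_le Filter.atTop hs
    set dγ : γ0 → Pi1LForm L α σ := fun g => (eγ.symm g).1 with hdγ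
    set dβ : β0 → LPosForm L α σ := fun b => (eβ.symm b).1 with hdβ
    have hkey : ∀ i : Finset γ0 × Finset β0,
        ∃ (M : LStructure L) (v : (a : α) → M.Dom (σ a)),
          LocalModel M T ∧ (∀ φ ∈ dγ '' ↑i.1, Pi1LForm.Realize φ M v) ∧
            (∀ ψ ∈ dβ '' ↑i.2, LPosForm.Realize M ψ v) := by
      intro i
      have h := hB (dγ '' ↑i.1) (by rintro _ ⟨g, _, rfl⟩; exact (eγ.symm g).2)
        ((i.1.finite_toSet).image _) (dβ '' ↑i.2)
        (by rintro _ ⟨b, _, rfl⟩; exact (eβ.symm b).2) ((i.2.finite_toSet).image _)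
      exact h
    choose MM vvraw h1 h2 h3 using hkey
    set vv : ∀ (a : α) i, (MM i).Dom (σ a) := fun a i => vvraw i a with hvvdef
    have hLoc : ∀ i, IsLocal (MM i) := fun i => (h1 i).1
    -- a.e. realization of each `φ ∈ Γ`
    have hmemΓ : ∀ φ (hφ : φ ∈ Γ),
        {i | Pi1LForm.Realize φ (MM i) (vvraw i)} ∈ U := by
      intro φ hφ
      apply Filter.mem_of_superset (hU _ (Filter.mem_atTop ({eγ ⟨φ, hφ⟩}, ∅)))
      intro j hj
      refine h2 j φ ⟨eγ ⟨φ, hφ⟩, ?_, by simp [hdγ]⟩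
      exact Finset.singleton_subset_iff.1 hj.1
    -- a.e. realization of each bound formula
    have hmemB : ∀ ψ (hψ : ψ ∈ B.toSet),
        {i | LPosForm.Realize (MM i) ψ (vvraw i)} ∈ U := by
      intro ψ hψ
      apply Filter.mem_of_superset (hU _ (Filter.mem_atTop (∅, {eβ ⟨ψ, hψ⟩})))
      intro j hj
      refine h3 j ψ ⟨eβ ⟨ψ, hψ⟩, ?_, by simp [hdβ]⟩
      exact Finset.singleton_subset_iff.1 hj.2
    -- the tuple is locally anchored to the constants pointwise
    have hvc : ∀ (a : α), Nonempty (L.Const (σ a)) →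
        ∃ (d : L.Loc (σ a)) (c : L.Const (σ a)),
          (uStr U MM).locRel d (Quotient.mk _ (vv a)) ((uStr U MM).constMap c) := by
      intro a h
      refine ⟨B.dConst a h, B.cConst a h, ?_⟩
      have hψ := hmemB _ (Or.inl ⟨a, h, rfl⟩)
      have hc : (uStr U MM).constMap (B.cConst a h)
          = Quotient.mk _ (fun i => (MM i).constMap (B.cConst a h)) := rfl
      rw [hc, locRel_mk]
      filter_upwards [hψ] with i hi
      have hi' : (MM i).relMap (L.locToRel (B.dConst a h))
          (fun k => LTerm.realize (MM i) (vvraw i)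
            (tpair (LTerm.var a) (LTerm.const (B.cConst a h)) k)) := hi
      rw [realize_tpair] at hi'
      exact hi'
    have hvv2 : ∀ (a b : α) (e : σ a = σ b),
        ∃ d : L.Loc (σ a),
          (uStr U MM).locRel d (Quotient.mk _ (vv a))
            (e.symm ▸ Quotient.mk (uSetoid U MM (σ b)) (vv b)) := by
      intro a b e
      refine ⟨B.dPair a b e, ?_⟩
      have hψ := hmemB _ (Or.inr ⟨a, b, e, rfl⟩)
      rw [mk_castSort, locRel_mk]
      filter_upwards [hψ] with i hi
      have hi' : (MM i).relMap (L.locToRel (B.dPair a b e))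
          (fun k => LTerm.realize (MM i) (vvraw i)
            (tpair (LTerm.var a) (e.symm ▸ LTerm.var b) k)) := hi
      rw [realize_tpair, realize_castTerm] at hi'
      exact hi'
    -- the local component of the ultraproduct
    set P := cStr U MM vv hLoc with hPdef
    have hPloc : IsLocal P := cStr_isLocal U MM vv hLoc hvc hvv2
    have hPmod : LocalModel P T := by
      refine ⟨hPloc, fun φ hφ hreal => ?_⟩
      have hup : φ.Realize (uStr U MM)
          (fun x : Empty => ((fun (e : Empty) => (e.elim : P.Dom (emptySorts L e))) x).1) :=
        pos_up U MM vv hLoc φ _ hreal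
      have hup' : φ.Realize (uStr U MM)
          (fun x : Empty => Quotient.mk _
            ((fun (e : Empty) (i : Finset γ0 × Finset β0) =>
              (e.elim : (MM i).Dom (emptySorts L e))) x)) := by
        convert hup using 1
        exact Iff.of_eq (congrArg (PosForm.Realize (uStr U MM) φ) (funext fun x => x.elim))
      have hae := los_posform U MM φ _ hup'
      obtain ⟨i, hi⟩ := Filter.nonempty_of_mem hae
      refine (h1 i).2 φ hφ ?_
      show φ.Realize (MM i) _
      convert hi using 1
      exact Iff.of_eq (congrArg (PosForm.Realize (MM i) φ) (funext fun x => x.elim))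
    refine ⟨P, fun a => ⟨Quotient.mk _ (vv a), vv_inC U MM vv hLoc a⟩, hPmod, ?_⟩
    intro φ hφ w
    rw [lf_abs U MM vv hLoc φ.matrix]
    set cw : ∀ (x : α ⊕ Fin φ.n) i, (MM i).Dom (Sum.elim σ φ.τ x) := fun x =>
      match x with
      | .inl a => vv a
      | .inr k => (w k).1.out
      with hcw
    have e1 : (fun x => (sval (M := P)
          (fun a => (⟨Quotient.mk _ (vv a), vv_inC U MM vv hLoc a⟩ : P.Dom (σ a))) w x).1)
        = fun x => Quotient.mk _ (cw x) := by
      funext x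
      cases x with
      | inl a => rfl
      | inr k => exact (Quotient.out_eq _).symm
    rw [e1, los_lform]
    filter_upwards [hmemΓ φ hφ] with i hi
    have := hi (fun k => cw (.inr k) i)
    convert this using 1
    funext x
    cases x <;> rfl
end
end

section
/- Let T be a locally satisfiable negative local theory in a local language L and let Γ be a partial local positive type of T on a variable x. Then there exists a local positive type of T on x extending Γ. -/
noncomputable section

namespace PTETT
open Filter Set Function

variable {L : LocalLanguage}

/-! ### Type-0 codes for local positive formulas -/

abbrev VarCode (α : Type) := α ⊕ ℕ

def shiftv {α : Type} : VarCode α → VarCode α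
  | .inl a => .inl a
  | .inr n => .inr (n + 1)

def extv {α β : Type} (f : β → VarCode α) : Option β → VarCode α
  | none => .inr 0
  | some b => shiftv (f b)

lemma shiftv_inj {α : Type} : Injective (shiftv (α := α)) := by
  intro x y h
  cases x <;> cases y <;> simp [shiftv] at h <;> simp [h]

lemma extv_inj {α β : Type} {f : β → VarCode α} (hf : Injective f) :
    Injective (extv f) := by
  intro o o' h
  cases o <;> cases o'
  · rfl
  · rename_i b; exfalso; rcases hb : f b with a | n <;> simp [extv, hb, shiftv] at h
  · rename_i b; exfalso; rcases hb : f b with a | n <;> simp [extv, hb, shiftv] at h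
  · rename_i b b'; simp only [extv] at h; rw [hf (shiftv_inj h)]

def TCode (L : LocalLanguage) (α : Type) : Type :=
  VarCode α ⊕ (Σ s : L.Sorts, L.Const s)

def encT {α β : Type} {τ : β → L.Sorts} (f : β → VarCode α) :
    {s : L.Sorts} → LTerm L β τ s → TCode L α
  | _, .var b => .inl (f b)
  | s, .const c => .inr ⟨s, c⟩

lemma encT_inj {α β : Type} {τ : β → L.Sorts} {f : β → VarCode α} (hf : Injective f)
    {s s' : L.Sorts} (t : LTerm L β τ s) (t' : LTerm L β τ s') (hs : s = s')
    (h : encT f t = encT f t') : HEq t t' := by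
  cases t <;> cases t'
  · rename_i b b'
    simp only [encT] at h
    obtain rfl := hf (Sum.inl.inj h)
    exact HEq.rfl
  · simp [encT] at h
  · simp [encT] at h
  · rename_i c c'
    subst hs
    simp only [encT] at h
    injection Sum.inr.inj h with h1 h2
    obtain rfl := h2
    exact HEq.rfl

inductive SkF (L : LocalLanguage) (α : Type) : Type
  | rel (n : ℕ) (ρ : Fin n → L.Sorts) (R : L.Rel n ρ) (ts : Fin n → TCode L α)
  | and (φ ψ : SkF L α)
  | or (φ ψ : SkF L α)
  | lex (s : L.Sorts) (d : L.Loc s) (t : TCode L α) (φ : SkF L α)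

def encF {α : Type} : {β : Type} → {τ : β → L.Sorts} → (β → VarCode α) →
    LPosForm L β τ → SkF L α
  | _, _, f, .rel (n := n) (ρ := ρ) R ts => .rel n ρ R (fun i => encT f (ts i))
  | _, _, f, .and φ ψ => .and (encF f φ) (encF f ψ)
  | _, _, f, .or φ ψ => .or (encF f φ) (encF f ψ)
  | _, _, f, .lex s d t φ => .lex s d (encT f t) (encF (extv f) φ)

lemma encF_inj {α : Type} : ∀ {β : Type} {τ : β → L.Sorts} (f : β → VarCode α),
    Injective f → ∀ (φ ψ : LPosForm L β τ), encF f φ = encF f ψ → φ = ψ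
  | β, τ, f, hf, @LPosForm.rel _ _ _ n ρ R ts, @LPosForm.rel _ _ _ n' ρ' R' ts', h => by
      simp only [encF] at h
      injection h with hn hρ hR hts
      subst hn
      obtain rfl : ρ = ρ' := eq_of_heq hρ
      obtain rfl : R = R' := eq_of_heq hR
      have hts' : ts = ts' :=
        funext fun i => eq_of_heq (encT_inj hf (ts i) (ts' i) rfl (congrFun (eq_of_heq hts) i))
      rw [hts']
  | β, τ, f, hf, .and φ ψ, .and φ' ψ', h => by
      simp only [encF] at h
      injection h with h1 h2
      rw [encF_inj f hf φ φ' h1, encF_inj f hf ψ ψ' h2]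
  | β, τ, f, hf, .or φ ψ, .or φ' ψ', h => by
      simp only [encF] at h
      injection h with h1 h2
      rw [encF_inj f hf φ φ' h1, encF_inj f hf ψ ψ' h2]
  | β, τ, f, hf, .lex s d t φ, .lex s' d' t' φ', h => by
      simp only [encF] at h
      injection h with hs hd ht hφ
      subst hs
      obtain rfl : d = d' := eq_of_heq hd
      obtain rfl : t = t' := eq_of_heq (encT_inj hf t t' rfl ht)
      rw [encF_inj (extv f) (extv_inj hf) φ φ' hφ]
  | β, τ, f, hf, .rel R ts, .and φ' ψ', h => by simp only [encF] at h; exact absurd h (by simp)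
  | β, τ, f, hf, .rel R ts, .or φ' ψ', h => by simp only [encF] at h; exact absurd h (by simp)
  | β, τ, f, hf, .rel R ts, .lex s' d' t' φ', h => by simp only [encF] at h; exact absurd h (by simp)
  | β, τ, f, hf, .and φ ψ, .rel R' ts', h => by simp only [encF] at h; exact absurd h (by simp)
  | β, τ, f, hf, .and φ ψ, .or φ' ψ', h => by simp only [encF] at h; exact absurd h (by simp)
  | β, τ, f, hf, .and φ ψ, .lex s' d' t' φ', h => by simp only [encF] at h; exact absurd h (by simp)
  | β, τ, f, hf, .or φ ψ, .rel R' ts', h => by simp only [encF] at h; exact absurd h (by simp)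
  | β, τ, f, hf, .or φ ψ, .and φ' ψ', h => by simp only [encF] at h; exact absurd h (by simp)
  | β, τ, f, hf, .or φ ψ, .lex s' d' t' φ', h => by simp only [encF] at h; exact absurd h (by simp)
  | β, τ, f, hf, .lex s d t φ, .rel R' ts', h => by simp only [encF] at h; exact absurd h (by simp)
  | β, τ, f, hf, .lex s d t φ, .and φ' ψ', h => by simp only [encF] at h; exact absurd h (by simp)
  | β, τ, f, hf, .lex s d t φ, .or φ' ψ', h => by simp only [encF] at h; exact absurd h (by simp)

/-- The standard injective encoding of `LPosForm L α σ` into the type-0 `SkF L α`. -/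
def enc {α : Type} {σ : α → L.Sorts} (φ : LPosForm L α σ) : SkF L α :=
  encF (fun a => .inl a) φ

lemma enc_inj {α : Type} {σ : α → L.Sorts} : Injective (enc (L := L) (σ := σ)) :=
  fun φ ψ h => encF_inj _ (fun a b hab => by simpa using hab) φ ψ h

/-! ### `Fin 2` helpers -/

lemma fin2_funext {C : Fin 2 → Sort*} {f g : (i : Fin 2) → C i}
    (h0 : f ⟨0, by omega⟩ = g ⟨0, by omega⟩) (h1 : f ⟨1, by omega⟩ = g ⟨1, by omega⟩) :
    f = g := by
  funext i
  match i with
  | ⟨0, _⟩ => exact h0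
  | ⟨1, _⟩ => exact h1

/-! ### casts -/

def dcast {M : LStructure L} {s s' : L.Sorts} (e : s = s') (x : M.Dom s) : M.Dom s' := e ▸ x

def tcast {α : Type} {σ : α → L.Sorts} {s s' : L.Sorts} (e : s = s')
    (t : LTerm L α σ s) : LTerm L α σ s' := e ▸ t

lemma tcast_realize (M : LStructure L) {α : Type} {σ : α → L.Sorts} {s s' : L.Sorts}
    (e : s = s') (t : LTerm L α σ s) (v : (a : α) → M.Dom (σ a)) :
    (tcast e t).realize M v = dcast e (t.realize M v) := by subst e; rfl

lemma tpair_realize (M : LStructure L) {α : Type} {σ : α → L.Sorts} {s t : L.Sorts}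
    (t₁ : LTerm L α σ s) (t₂ : LTerm L α σ t) (v : (a : α) → M.Dom (σ a)) :
    (fun i => ((tpair t₁ t₂) i).realize M v) = dpair (t₁.realize M v) (t₂.realize M v) := by
  apply fin2_funext <;> rfl

lemma realize_relpair (M : LStructure L) {α : Type} {σ : α → L.Sorts} {s : L.Sorts}
    (d : L.Loc s) (t₁ t₂ : LTerm L α σ s) (v : (a : α) → M.Dom (σ a)) :
    LPosForm.Realize M (.rel (L.locToRel d) (tpair t₁ t₂)) v ↔
      M.locRel d (t₁.realize M v) (t₂.realize M v) := by
  have h : LPosForm.Realize M (.rel (L.locToRel d) (tpair t₁ t₂)) v =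
      M.relMap (L.locToRel d) (fun i => ((tpair t₁ t₂) i).realize M v) := rfl
  rw [h, tpair_realize]
  exact Iff.rfl

/-! ### Ultraproducts -/

section Ultraproduct

variable {ι : Type} (Ms : ι → LStructure L) (U : Ultrafilter ι)

def uSetoid (s : L.Sorts) : Setoid ((i : ι) → (Ms i).Dom s) where
  r f g := ∀ᶠ i in (U : Filter ι), f i = g i
  iseqv := by
    refine ⟨fun f => Eventually.of_forall fun i => rfl,
      fun h => h.mono fun i hi => hi.symm,
      fun h1 h2 => (h1.and h2).mono fun i hi => hi.1.trans hi.2⟩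

def UProd : LStructure L where
  Dom s := Quotient (uSetoid Ms U s)
  relMap {n ρ} R x := ∀ᶠ i in (U : Filter ι), (Ms i).relMap R (fun k => (x k).out i)
  constMap {s} c := Quotient.mk (uSetoid Ms U s) (fun i => (Ms i).constMap c)

def umk {s : L.Sorts} (f : (i : ι) → (Ms i).Dom s) : (UProd Ms U).Dom s :=
  Quotient.mk (uSetoid Ms U s) f

lemma umk_exists_rep {s : L.Sorts} (x : (UProd Ms U).Dom s) :
    ∃ f : (i : ι) → (Ms i).Dom s, umk Ms U f = x :=
  Quotient.exists_rep x

lemma constMap_umk {s : L.Sorts} (c : L.Const s) :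
    (UProd Ms U).constMap c = umk Ms U (fun i => (Ms i).constMap c) := rfl

lemma relMap_def {n : ℕ} {ρ : Fin n → L.Sorts} (R : L.Rel n ρ)
    (x : (k : Fin n) → (UProd Ms U).Dom (ρ k)) :
    (UProd Ms U).relMap R x ↔
      ∀ᶠ i in (U : Filter ι), (Ms i).relMap R (fun k => (x k).out i) := Iff.rfl

lemma relMap_umk {n : ℕ} {ρ : Fin n → L.Sorts} (R : L.Rel n ρ)
    (f : (k : Fin n) → (i : ι) → (Ms i).Dom (ρ k)) :
    (UProd Ms U).relMap R (fun k => umk Ms U (f k)) ↔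
      ∀ᶠ i in (U : Filter ι), (Ms i).relMap R (fun k => f k i) := by
  have h : ∀ᶠ i in (U : Filter ι), ∀ k : Fin n,
      (Quotient.out (umk Ms U (f k) : Quotient (uSetoid Ms U (ρ k)))) i = f k i := by
    rw [eventually_all]
    intro k
    exact Quotient.mk_out (s := uSetoid Ms U (ρ k)) (f k)
  rw [relMap_def]
  refine eventually_congr (h.mono fun i hk => ?_)
  have e : (fun k => (Quotient.out ((fun k => umk Ms U (f k)) k)) i) = fun k => f k i :=
    funext fun k => hk k
  rw [e]

lemma term_umk {α : Type} {σ : α → L.Sorts} {s : L.Sorts} (t : LTerm L α σ s)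
    (v : (a : α) → (i : ι) → (Ms i).Dom (σ a)) :
    t.realize (UProd Ms U) (fun a => umk Ms U (v a)) =
      umk Ms U (fun i => t.realize (Ms i) (fun a => v a i)) := by
  cases t with
  | var a => rfl
  | const c => rfl

lemma dpair_umk {s : L.Sorts} (f g : (i : ι) → (Ms i).Dom s) :
    (dpair (umk Ms U f) (umk Ms U g) : (k : Fin 2) → (UProd Ms U).Dom (![s, s] k)) =
      fun k => umk Ms U ((dpair f g : (k : Fin 2) → (i : ι) → (Ms i).Dom (![s, s] k)) k) := by
  apply fin2_funext <;> rfl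

lemma locRel_umk {s : L.Sorts} (d : L.Loc s) (f g : (i : ι) → (Ms i).Dom s) :
    (UProd Ms U).locRel d (umk Ms U f) (umk Ms U g) ↔
      ∀ᶠ i in (U : Filter ι), (Ms i).locRel d (f i) (g i) := by
  unfold LStructure.locRel
  erw [dpair_umk, relMap_umk]
  refine eventually_congr (Eventually.of_forall fun i => ?_)
  have e : (fun k => (dpair f g : (k : Fin 2) → (j : ι) → (Ms j).Dom (![s, s] k)) k i) =
      (dpair (f i) (g i) : (k : Fin 2) → (Ms i).Dom (![s, s] k)) := by
    apply fin2_funext <;> rfl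
  rw [e]


lemma cast_umk {s s' : L.Sorts} (e : s = s') (f : (i : ι) → (Ms i).Dom s) :
    dcast e (umk Ms U f) = umk Ms U (fun i => dcast e (f i)) := by
  subst e; rfl

/-! ### Łoś-type transfer -/

theorem los_down : ∀ {α : Type} {σ : α → L.Sorts} (φ : LPosForm L α σ)
    (v : (a : α) → (i : ι) → (Ms i).Dom (σ a)),
    (∀ᶠ i in (U : Filter ι), φ.Realize (Ms i) (fun a => v a i)) →
    φ.Realize (UProd Ms U) (fun a => umk Ms U (v a))
  | α, σ, .rel R ts, v, h => by
      show (UProd Ms U).relMap R (fun k => (ts k).realize (UProd Ms U) (fun a => umk Ms U (v a)))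
      have e : (fun k => (ts k).realize (UProd Ms U) (fun a => umk Ms U (v a)))
          = fun k => umk Ms U (fun i => (ts k).realize (Ms i) (fun a => v a i)) := by
        funext k; exact term_umk Ms U (ts k) v
      rw [e, relMap_umk]
      exact h
  | α, σ, .and φ ψ, v, h =>
      ⟨los_down φ v (h.mono fun i hi => hi.1), los_down ψ v (h.mono fun i hi => hi.2)⟩
  | α, σ, .or φ ψ, v, h => by
      have h' : (∀ᶠ i in (U : Filter ι), φ.Realize (Ms i) (fun a => v a i)) ∨
          (∀ᶠ i in (U : Filter ι), ψ.Realize (Ms i) (fun a => v a i)) :=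
        Ultrafilter.eventually_or.mp (h.mono fun i hi => hi)
      cases h' with
      | inl h' => exact Or.inl (los_down φ v h')
      | inr h' => exact Or.inr (los_down ψ v h')
  | α, σ, .lex s d t φ, v, h => by
      classical
      let P : (i : ι) → (Ms i).Dom s → Prop := fun i x =>
        (Ms i).locRel d x (t.realize (Ms i) (fun a => v a i)) ∧
          φ.Realize (Ms i) (vcons x (fun a => v a i))
      let w : (i : ι) → (Ms i).Dom s := fun i =>
        if hh : ∃ x, P i x then hh.choose else t.realize (Ms i) (fun a => v a i)
      have hw : ∀ᶠ i in (U : Filter ι), P i (w i) := by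
        refine h.mono fun i hi => ?_
        have hh : ∃ x, P i x := hi
        simpa only [w, dif_pos hh] using hh.choose_spec
      let v' : (o : Option α) → (i : ι) → (Ms i).Dom (osort s σ o) := fun o =>
        match o with
        | none => w
        | some a => v a
      refine ⟨umk Ms U w, ?_, ?_⟩
      · rw [term_umk]
        exact (locRel_umk Ms U d w _).mpr (hw.mono fun i hi => hi.1)
      · have hbody := los_down (α := Option α) (σ := osort s σ) φ v'
          (hw.mono fun i hi => by
            have e2 : (fun o => v' o i) = vcons (w i) (fun a => v a i) := by
              funext o; cases o <;> rfl
            rw [e2]; exact hi.2)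
        have e1 : (fun o => umk Ms U (v' o)) =
            vcons (umk Ms U w) (fun a => umk Ms U (v a)) := by
          funext o; cases o <;> rfl
        rwa [e1] at hbody

theorem los_up : ∀ {α : Type} {σ : α → L.Sorts} (φ : PosForm L α σ)
    (v : (a : α) → (i : ι) → (Ms i).Dom (σ a)),
    φ.Realize (UProd Ms U) (fun a => umk Ms U (v a)) →
    ∀ᶠ i in (U : Filter ι), φ.Realize (Ms i) (fun a => v a i)
  | α, σ, .rel R ts, v, h => by
      have e : (fun k => (ts k).realize (UProd Ms U) (fun a => umk Ms U (v a)))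
          = fun k => umk Ms U (fun i => (ts k).realize (Ms i) (fun a => v a i)) := by
        funext k; exact term_umk Ms U (ts k) v
      have h' : (UProd Ms U).relMap R
          (fun k => (ts k).realize (UProd Ms U) (fun a => umk Ms U (v a))) := h
      rw [e, relMap_umk] at h'
      exact h'
  | α, σ, .and φ ψ, v, h =>
      ((los_up φ v h.1).and (los_up ψ v h.2)).mono fun i hi => hi
  | α, σ, .or φ ψ, v, h => by
      cases h with
      | inl h => exact (los_up φ v h).mono fun i hi => Or.inl hi
      | inr h => exact (los_up ψ v h).mono fun i hi => Or.inr hi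
  | α, σ, .ex s φ, v, h => by
      obtain ⟨x, hx⟩ := h
      obtain ⟨w, rfl⟩ := umk_exists_rep Ms U x
      let v' : (o : Option α) → (i : ι) → (Ms i).Dom (osort s σ o) := fun o =>
        match o with
        | none => w
        | some a => v a
      have e1 : vcons (M := UProd Ms U) (umk Ms U w) (fun a => umk Ms U (v a)) =
          fun o => umk Ms U (v' o) := by
        funext o; cases o <;> rfl
      rw [e1] at hx
      refine (los_up φ v' hx).mono fun i hi => ⟨w i, ?_⟩
      have e2 : (fun o => v' o i) = vcons (w i) (fun a => v a i) := by
        funext o; cases o <;> rfl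
      rwa [e2] at hi

/-! ### locality facts for the ultraproduct -/

lemma q_symm (hloc : ∀ i, IsLocal (Ms i)) {s : L.Sorts} (d : L.Loc s) (x y : (UProd Ms U).Dom s)
    (h : (UProd Ms U).locRel d x y) : (UProd Ms U).locRel d y x := by
  obtain ⟨f, rfl⟩ := umk_exists_rep Ms U x
  obtain ⟨g, rfl⟩ := umk_exists_rep Ms U y
  exact (locRel_umk Ms U d g f).mpr
    (((locRel_umk Ms U d f g).mp h).mono fun i hi => (hloc i).symm d _ _ hi)

lemma q_mono (hloc : ∀ i, IsLocal (Ms i)) {s : L.Sorts} (d₁ d₂ : L.Loc s) (hle : L.locLe d₁ d₂)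
    (x y : (UProd Ms U).Dom s) (h : (UProd Ms U).locRel d₁ x y) :
    (UProd Ms U).locRel d₂ x y := by
  obtain ⟨f, rfl⟩ := umk_exists_rep Ms U x
  obtain ⟨g, rfl⟩ := umk_exists_rep Ms U y
  exact (locRel_umk Ms U d₂ f g).mpr
    (((locRel_umk Ms U d₁ f g).mp h).mono fun i hi => (hloc i).mono d₁ d₂ hle _ _ hi)

lemma q_comp (hloc : ∀ i, IsLocal (Ms i)) {s : L.Sorts} (d₁ d₂ : L.Loc s) (x y z : (UProd Ms U).Dom s)
    (h₁ : (UProd Ms U).locRel d₁ x y) (h₂ : (UProd Ms U).locRel d₂ y z) :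
    (UProd Ms U).locRel (L.locMul d₁ d₂) x z := by
  obtain ⟨f, rfl⟩ := umk_exists_rep Ms U x
  obtain ⟨g, rfl⟩ := umk_exists_rep Ms U y
  obtain ⟨k, rfl⟩ := umk_exists_rep Ms U z
  exact (locRel_umk Ms U _ f k).mpr
    ((((locRel_umk Ms U d₁ f g).mp h₁).and ((locRel_umk Ms U d₂ g k).mp h₂)).mono
      fun i hi => (hloc i).comp d₁ d₂ _ _ _ hi.1 hi.2)

lemma q_bound (hloc : ∀ i, IsLocal (Ms i)) {s : L.Sorts} (c₁ c₂ : L.Const s) :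
    (UProd Ms U).locRel (L.bound c₁ c₂) ((UProd Ms U).constMap c₁) ((UProd Ms U).constMap c₂) :=
  (locRel_umk Ms U _ _ _).mpr (Eventually.of_forall fun i => (hloc i).boundAx c₁ c₂)

lemma q_dd0 (hloc : ∀ i, IsLocal (Ms i)) {s : L.Sorts} (x y : (UProd Ms U).Dom s) :
    (UProd Ms U).locRel (L.dd0 s) x y ↔ x = y := by
  obtain ⟨f, rfl⟩ := umk_exists_rep Ms U x
  obtain ⟨g, rfl⟩ := umk_exists_rep Ms U y
  constructor
  · intro h
    exact Quotient.sound
      (((locRel_umk Ms U _ f g).mp h).mono fun i hi => ((hloc i).dd0_eq _ _).mp hi)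
  · intro h
    exact (locRel_umk Ms U _ f g).mpr
      ((Quotient.exact h).mono fun i hi => ((hloc i).dd0_eq _ _).mpr hi)

end Ultraproduct

/-! ### The local substructure around a tuple -/

section Sub

variable (Q : LStructure L) {α : Type} {σ : α → L.Sorts} (vs : (a : α) → Q.Dom (σ a))

/-- Base points: constants and the values of the tuple. -/
def BaseP (s : L.Sorts) (x : Q.Dom s) : Prop :=
  (∃ c : L.Const s, x = Q.constMap c) ∨ ∃ (a : α) (e : σ a = s), x = dcast e (vs a)

/-- The carrier: everything at finite distance from a base point. -/
def carrierS (s : L.Sorts) : Set (Q.Dom s) :=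
  {x | ∃ (d : L.Loc s) (b : Q.Dom s), BaseP Q vs s b ∧ Q.locRel d b x}

variable (hsymm : ∀ {s : L.Sorts} (d : L.Loc s) (a b : Q.Dom s), Q.locRel d a b → Q.locRel d b a)
variable (hcomp : ∀ {s : L.Sorts} (d₁ d₂ : L.Loc s) (a b c : Q.Dom s),
  Q.locRel d₁ a b → Q.locRel d₂ b c → Q.locRel (L.locMul d₁ d₂) a c)
variable (hbound : ∀ {s : L.Sorts} (c₁ c₂ : L.Const s),
  Q.locRel (L.bound c₁ c₂) (Q.constMap c₁) (Q.constMap c₂))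
variable (hdd0 : ∀ {s : L.Sorts} (a b : Q.Dom s), Q.locRel (L.dd0 s) a b ↔ a = b)
variable (hE : ∀ (a b : α) (e : σ a = σ b), ∃ d, Q.locRel d (dcast e (vs a)) (vs b))
variable (hD : ∀ (a : α) (c : L.Const (σ a)), ∃ d, Q.locRel d (vs a) (Q.constMap c))

lemma base_rel {s : L.Sorts} {x y : Q.Dom s}
    (hsymm : ∀ {s : L.Sorts} (d : L.Loc s) (a b : Q.Dom s), Q.locRel d a b → Q.locRel d b a)
    (hE : ∀ (a b : α) (e : σ a = σ b), ∃ d, Q.locRel d (dcast e (vs a)) (vs b))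
    (hD : ∀ (a : α) (c : L.Const (σ a)), ∃ d, Q.locRel d (vs a) (Q.constMap c))
    (hbound : ∀ {s : L.Sorts} (c₁ c₂ : L.Const s),
      Q.locRel (L.bound c₁ c₂) (Q.constMap c₁) (Q.constMap c₂))
    (hx : BaseP Q vs s x) (hy : BaseP Q vs s y) : ∃ d, Q.locRel d x y := by
  rcases hx with ⟨c₁, rfl⟩ | ⟨a, e, rfl⟩
  · rcases hy with ⟨c₂, rfl⟩ | ⟨b, e', rfl⟩
    · exact ⟨L.bound c₁ c₂, hbound c₁ c₂⟩
    · subst e'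
      obtain ⟨d, hd⟩ := hD b c₁
      exact ⟨d, hsymm d _ _ hd⟩
  · rcases hy with ⟨c₂, rfl⟩ | ⟨b, e', rfl⟩
    · subst e
      exact hD a c₂
    · subst e'
      exact hE a b e
  
lemma carrier_ball
    (hsymm : ∀ {s : L.Sorts} (d : L.Loc s) (a b : Q.Dom s), Q.locRel d a b → Q.locRel d b a)
    (hcomp : ∀ {s : L.Sorts} (d₁ d₂ : L.Loc s) (a b c : Q.Dom s),
      Q.locRel d₁ a b → Q.locRel d₂ b c → Q.locRel (L.locMul d₁ d₂) a c)
    {s : L.Sorts} (d : L.Loc s) {x y : Q.Dom s}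
    (hy : y ∈ carrierS Q vs s) (hxy : Q.locRel d x y) : x ∈ carrierS Q vs s := by
  obtain ⟨d', b, hb, hby⟩ := hy
  exact ⟨L.locMul d' d, b, hb, hcomp d' d b y x hby (hsymm d x y hxy)⟩

def SubN (hdd0 : ∀ {s : L.Sorts} (a b : Q.Dom s), Q.locRel (L.dd0 s) a b ↔ a = b) :
    Substruct Q where
  carrier := carrierS Q vs
  const_mem {s} c := ⟨L.dd0 s, Q.constMap c, Or.inl ⟨c, rfl⟩, (hdd0 _ _).mpr rfl⟩

/-- The induced localized structure. -/
def NStr (hdd0 : ∀ {s : L.Sorts} (a b : Q.Dom s), Q.locRel (L.dd0 s) a b ↔ a = b) :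
    LStructure L :=
  (SubN Q vs hdd0).toStruct

lemma nn_locRel {s : L.Sorts} (d : L.Loc s) (x y : (NStr Q vs @hdd0).Dom s) :
    (NStr Q vs @hdd0).locRel d x y ↔ Q.locRel d x.1 y.1 := by
  unfold LStructure.locRel
  have e : (fun i => ((dpair x y : (i : Fin 2) → (NStr Q vs @hdd0).Dom (![s, s] i)) i).1) =
      (dpair x.1 y.1 : (i : Fin 2) → Q.Dom (![s, s] i)) := by
    apply fin2_funext <;> rfl
  show Q.relMap (L.locToRel d) _ ↔ Q.relMap (L.locToRel d) _
  rw [e]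

lemma nn_const {s : L.Sorts} (c : L.Const s) :
    ((NStr Q vs @hdd0).constMap c).1 = Q.constMap c := rfl

lemma nn_isLocal
    (hsymm : ∀ {s : L.Sorts} (d : L.Loc s) (a b : Q.Dom s), Q.locRel d a b → Q.locRel d b a)
    (hmono : ∀ {s : L.Sorts} (d₁ d₂ : L.Loc s), L.locLe d₁ d₂ →
      ∀ (a b : Q.Dom s), Q.locRel d₁ a b → Q.locRel d₂ a b)
    (hcomp : ∀ {s : L.Sorts} (d₁ d₂ : L.Loc s) (a b c : Q.Dom s),
      Q.locRel d₁ a b → Q.locRel d₂ b c → Q.locRel (L.locMul d₁ d₂) a c)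
    (hbound : ∀ {s : L.Sorts} (c₁ c₂ : L.Const s),
      Q.locRel (L.bound c₁ c₂) (Q.constMap c₁) (Q.constMap c₂))
    (hdd0 : ∀ {s : L.Sorts} (a b : Q.Dom s), Q.locRel (L.dd0 s) a b ↔ a = b)
    (hE : ∀ (a b : α) (e : σ a = σ b), ∃ d, Q.locRel d (dcast e (vs a)) (vs b))
    (hD : ∀ (a : α) (c : L.Const (σ a)), ∃ d, Q.locRel d (vs a) (Q.constMap c)) :
    IsLocal (NStr Q vs @hdd0) where
  symm d a b h := by
    rw [nn_locRel] at *
    exact hsymm d _ _ h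
  mono d₁ d₂ hle a b h := by
    rw [nn_locRel] at *
    exact hmono d₁ d₂ hle _ _ h
  comp d₁ d₂ a b c h₁ h₂ := by
    rw [nn_locRel] at *
    exact hcomp d₁ d₂ _ _ _ h₁ h₂
  boundAx c₁ c₂ := by
    rw [nn_locRel]
    exact hbound c₁ c₂
  total {s} a b := by
    obtain ⟨d₁, b₁, hb₁, h₁⟩ := a.2
    obtain ⟨d₂, b₂, hb₂, h₂⟩ := b.2
    obtain ⟨d₀, h₀⟩ := base_rel Q vs @hsymm hE hD @hbound hb₁ hb₂
    refine ⟨L.locMul (L.locMul d₁ d₀) d₂, ?_⟩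
    rw [nn_locRel]
    exact hcomp _ d₂ _ _ _ (hcomp d₁ d₀ _ _ _ (hsymm d₁ _ _ h₁) h₀) h₂
  dd0_eq {s} a b := by
    rw [nn_locRel, hdd0]
    exact ⟨fun h => Subtype.ext h, fun h => congrArg Subtype.val h⟩

lemma term_sub {β : Type} {τ : β → L.Sorts} {s : L.Sorts} (t : LTerm L β τ s)
    (w : (b : β) → (NStr Q vs @hdd0).Dom (τ b)) :
    (t.realize (NStr Q vs @hdd0) w).1 = t.realize Q (fun b => (w b).1) := by
  cases t <;> rfl

theorem lpos_down_sub
    (hsymm : ∀ {s : L.Sorts} (d : L.Loc s) (a b : Q.Dom s), Q.locRel d a b → Q.locRel d b a)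
    (hcomp : ∀ {s : L.Sorts} (d₁ d₂ : L.Loc s) (a b c : Q.Dom s),
      Q.locRel d₁ a b → Q.locRel d₂ b c → Q.locRel (L.locMul d₁ d₂) a c)
    (hdd0 : ∀ {s : L.Sorts} (a b : Q.Dom s), Q.locRel (L.dd0 s) a b ↔ a = b) :
    ∀ {β : Type} {τ : β → L.Sorts} (φ : LPosForm L β τ)
    (w : (b : β) → (NStr Q vs @hdd0).Dom (τ b)),
    φ.Realize Q (fun b => (w b).1) → φ.Realize (NStr Q vs @hdd0) w
  | β, τ, .rel R ts, w, h => by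
      show (NStr Q vs @hdd0).relMap R (fun k => (ts k).realize (NStr Q vs @hdd0) w)
      show Q.relMap R (fun k => ((ts k).realize (NStr Q vs @hdd0) w).1)
      have e : (fun k => ((ts k).realize (NStr Q vs @hdd0) w).1) =
          fun k => (ts k).realize Q (fun b => (w b).1) := by
        funext k; exact term_sub Q vs @hdd0 (ts k) w
      rw [e]
      exact h
  | β, τ, .and φ ψ, w, h =>
      ⟨lpos_down_sub @hsymm @hcomp @hdd0 φ w h.1, lpos_down_sub @hsymm @hcomp @hdd0 ψ w h.2⟩
  | β, τ, .or φ ψ, w, h => by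
      cases h with
      | inl h => exact Or.inl (lpos_down_sub @hsymm @hcomp @hdd0 φ w h)
      | inr h => exact Or.inr (lpos_down_sub @hsymm @hcomp @hdd0 ψ w h)
  | β, τ, .lex s d t φ, w, h => by
      obtain ⟨x, hx1, hx2⟩ := h
      have htv : (t.realize (NStr Q vs @hdd0) w).1 = t.realize Q (fun b => (w b).1) :=
        term_sub Q vs @hdd0 t w
      have hxmem : x ∈ carrierS Q vs s := by
        refine carrier_ball Q vs @hsymm @hcomp d (t.realize (NStr Q vs @hdd0) w).2 ?_
        rw [htv]
        exact hx1
      refine ⟨⟨x, hxmem⟩, ?_, ?_⟩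
      · refine (nn_locRel Q vs @hdd0 d _ _).mpr ?_; rw [htv]
        exact hx1
      · have e : (fun o => ((vcons (M := NStr Q vs @hdd0) ⟨x, hxmem⟩ w) o).1) =
            vcons x (fun b => (w b).1) := by
          funext o; cases o <;> rfl
        refine lpos_down_sub @hsymm @hcomp @hdd0 φ _ ?_
        rw [e]
        exact hx2

theorem pos_up_sub :
    ∀ {β : Type} {τ : β → L.Sorts} (φ : PosForm L β τ)
    (w : (b : β) → (NStr Q vs @hdd0).Dom (τ b)),
    φ.Realize (NStr Q vs @hdd0) w → φ.Realize Q (fun b => (w b).1)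
  | β, τ, .rel R ts, w, h => by
      have h' : Q.relMap R (fun k => ((ts k).realize (NStr Q vs @hdd0) w).1) := h
      have e : (fun k => ((ts k).realize (NStr Q vs @hdd0) w).1) =
          fun k => (ts k).realize Q (fun b => (w b).1) := by
        funext k; exact term_sub Q vs @hdd0 (ts k) w
      rwa [e] at h'
  | β, τ, .and φ ψ, w, h => ⟨pos_up_sub φ w h.1, pos_up_sub ψ w h.2⟩
  | β, τ, .or φ ψ, w, h => by
      cases h with
      | inl h => exact Or.inl (pos_up_sub φ w h)
      | inr h => exact Or.inr (pos_up_sub ψ w h)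
  | β, τ, .ex s φ, w, h => by
      obtain ⟨x, hx⟩ := h
      refine ⟨x.1, ?_⟩
      have e : (fun o => ((vcons (M := NStr Q vs @hdd0) x w) o).1) =
          vcons x.1 (fun b => (w b).1) := by
        funext o; cases o <;> rfl
      have := pos_up_sub φ (vcons x w) hx
      rwa [e] at this

end Sub


/-! ### Bound formulas extracted from a reference realization -/

section Bound

variable {α : Type} {σ : α → L.Sorts}
variable (M₀ : LStructure L) (h0 : IsLocal M₀) (v₀ : (a : α) → M₀.Dom (σ a))

noncomputable def DL (a : α) (h : Nonempty (L.Const (σ a))) : L.Loc (σ a) :=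
  (h0.total (v₀ a) (M₀.constMap h.some)).choose

lemma DL_spec (a : α) (h : Nonempty (L.Const (σ a))) :
    M₀.locRel (DL M₀ h0 v₀ a h) (v₀ a) (M₀.constMap h.some) :=
  (h0.total (v₀ a) (M₀.constMap h.some)).choose_spec

noncomputable def EL (a b : α) (e : σ a = σ b) : L.Loc (σ b) :=
  (h0.total (dcast e (v₀ a)) (v₀ b)).choose

lemma EL_spec (a b : α) (e : σ a = σ b) :
    M₀.locRel (EL M₀ h0 v₀ a b e) (dcast e (v₀ a)) (v₀ b) :=
  (h0.total (dcast e (v₀ a)) (v₀ b)).choose_spec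

def BsetD : Set (LPosForm L α σ) :=
  {φ | (∃ (a : α) (h : Nonempty (L.Const (σ a))),
          φ = .rel (L.locToRel (DL M₀ h0 v₀ a h)) (tpair (.var a) (.const h.some)))
    ∨ ∃ (a b : α) (e : σ a = σ b),
          φ = .rel (L.locToRel (EL M₀ h0 v₀ a b e)) (tpair (tcast e (.var a)) (.var b))}

lemma Bset_realize_self : ∀ ψ ∈ BsetD M₀ h0 v₀, LPosForm.Realize M₀ ψ v₀ := by
  rintro ψ (⟨a, h, rfl⟩ | ⟨a, b, e, rfl⟩)
  · rw [realize_relpair]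
    exact DL_spec M₀ h0 v₀ a h
  · rw [realize_relpair, tcast_realize]
    exact EL_spec M₀ h0 v₀ a b e

lemma Bset_locRel {M : LStructure L} {v : (a : α) → M.Dom (σ a)}
    (hb : ∀ ψ ∈ BsetD M₀ h0 v₀, LPosForm.Realize M ψ v) :
    (∀ (a : α) (h : Nonempty (L.Const (σ a))),
        M.locRel (DL M₀ h0 v₀ a h) (v a) (M.constMap h.some)) ∧
    (∀ (a b : α) (e : σ a = σ b), M.locRel (EL M₀ h0 v₀ a b e) (dcast e (v a)) (v b)) := by
  constructor
  · intro a h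
    have := hb _ (Or.inl ⟨a, h, rfl⟩)
    rw [realize_relpair] at this
    exact this
  · intro a b e
    have := hb _ (Or.inr ⟨a, b, e, rfl⟩)
    rw [realize_relpair, tcast_realize] at this
    exact this

end Bound

/-! ### Chains and finite subsets -/

lemma chain_finite {γ : Type*} {c : Set (Set γ)} (hchain : IsChain (· ⊆ ·) c)
    (hcne : c.Nonempty) :
    ∀ {F : Set γ}, F.Finite → F ⊆ ⋃₀ c → ∃ Δ ∈ c, F ⊆ Δ := by
  intro F hF
  refine Set.Finite.induction_on F hF ?_ ?_
  · intro _
    obtain ⟨Δ, hΔ⟩ := hcne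
    exact ⟨Δ, hΔ, Set.empty_subset Δ⟩
  · intro a s ha hs ih hsub
    obtain ⟨Δ₁, hΔ₁c, hΔ₁⟩ := ih (fun x hx => hsub (Set.mem_insert_of_mem a hx))
    obtain ⟨Δ₂, hΔ₂c, ha₂⟩ := hsub (Set.mem_insert a s)
    rcases eq_or_ne Δ₁ Δ₂ with rfl | hne
    · exact ⟨Δ₁, hΔ₁c, Set.insert_subset_iff.mpr ⟨ha₂, hΔ₁⟩⟩
    · rcases hchain hΔ₁c hΔ₂c hne with h | h
      · exact ⟨Δ₂, hΔ₂c, Set.insert_subset_iff.mpr ⟨ha₂, hΔ₁.trans h⟩⟩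
      · exact ⟨Δ₁, hΔ₁c, Set.insert_subset_iff.mpr ⟨h ha₂, hΔ₁⟩⟩

/-! ### Compactness along a chain -/

theorem sat_sUnion {T : Set (PosSentence L)} {α : Type} {σ : α → L.Sorts}
    (M₀ : LStructure L) (h0 : IsLocal M₀) (v₀ : (a : α) → M₀.Dom (σ a))
    (c : Set (Set (LPosForm L α σ))) (hchain : IsChain (· ⊆ ·) c) (hcne : c.Nonempty)
    (hB : ∀ Δ ∈ c, BsetD M₀ h0 v₀ ⊆ Δ)
    (hSat : ∀ Δ ∈ c, ∃ (M : LStructure L) (v : (a : α) → M.Dom (σ a)),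
      LocalModel M T ∧ ∀ φ ∈ Δ, LPosForm.Realize M φ v) :
    ∃ (M : LStructure L) (v : (a : α) → M.Dom (σ a)),
      LocalModel M T ∧ ∀ φ ∈ ⋃₀ c, LPosForm.Realize M φ v := by
  classical
  haveI : Filter.NeBot (Filter.atTop : Filter (Finset (SkF L α))) := Filter.atTop_neBot
  set U : Ultrafilter (Finset (SkF L α)) := Ultrafilter.of Filter.atTop with hUdef
  have hU : ∀ G : Finset (SkF L α), ∀ᶠ F in (U : Filter (Finset (SkF L α))), G ≤ F :=
    fun G => (Ultrafilter.of_le Filter.atTop) (Filter.eventually_ge_atTop G)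
  have hex : ∀ F : Finset (SkF L α),
      ∃ (M : LStructure L) (v : (a : α) → M.Dom (σ a)), LocalModel M T ∧
        (∀ φ ∈ ⋃₀ c, enc φ ∈ F → LPosForm.Realize M φ v) ∧
        (∀ ψ ∈ BsetD M₀ h0 v₀, LPosForm.Realize M ψ v) := by
    intro F
    have hfin : {φ ∈ ⋃₀ c | enc φ ∈ F}.Finite := by
      have hsub : {φ ∈ ⋃₀ c | enc φ ∈ F} ⊆ enc ⁻¹' ↑F := fun φ hφ => hφ.2
      exact Set.Finite.subset (Set.Finite.preimage (Set.injOn_of_injective enc_inj)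
        F.finite_toSet) hsub
    obtain ⟨Δ, hΔc, hsubΔ⟩ := chain_finite hchain hcne hfin (fun φ hφ => hφ.1)
    obtain ⟨M, v, hM, hMre⟩ := hSat Δ hΔc
    exact ⟨M, v, hM, fun φ hφ hφF => hMre φ (hsubΔ ⟨hφ, hφF⟩),
      fun ψ hψ => hMre ψ (hB Δ hΔc hψ)⟩
  choose MM vv hMM hRe hRB using hex
  have hloc : ∀ F, IsLocal (MM F) := fun F => (hMM F).1
  let vsQ : (a : α) → (UProd MM U).Dom (σ a) := fun a => umk MM U (fun F => vv F a)
  have hBF : ∀ F, (∀ (a : α) (h : Nonempty (L.Const (σ a))),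
      (MM F).locRel (DL M₀ h0 v₀ a h) (vv F a) ((MM F).constMap h.some)) ∧
      (∀ (a b : α) (e : σ a = σ b),
        (MM F).locRel (EL M₀ h0 v₀ a b e) (dcast e (vv F a)) (vv F b)) :=
    fun F => Bset_locRel M₀ h0 v₀ (hRB F)
  have hE : ∀ (a b : α) (e : σ a = σ b),
      ∃ d, (UProd MM U).locRel d (dcast e (vsQ a)) (vsQ b) := by
    intro a b e
    refine ⟨EL M₀ h0 v₀ a b e, ?_⟩
    have hc : dcast e (vsQ a) = umk MM U (fun F => dcast e (vv F a)) :=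
      cast_umk MM U e _
    rw [hc]
    exact (locRel_umk MM U _ _ _).mpr (Filter.Eventually.of_forall fun F => (hBF F).2 a b e)
  have hD : ∀ (a : α) (c0 : L.Const (σ a)),
      ∃ d, (UProd MM U).locRel d (vsQ a) ((UProd MM U).constMap c0) := by
    intro a c0
    have hne : Nonempty (L.Const (σ a)) := ⟨c0⟩
    have h1 : (UProd MM U).locRel (DL M₀ h0 v₀ a hne) (vsQ a)
        ((UProd MM U).constMap hne.some) := by
      rw [constMap_umk]
      exact (locRel_umk MM U _ _ _).mpr
        (Filter.Eventually.of_forall fun F => (hBF F).1 a hne)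
    exact ⟨_, q_comp MM U hloc _ _ _ _ _ h1 (q_bound MM U hloc hne.some c0)⟩
  let N : LStructure L := NStr (UProd MM U) vsQ (q_dd0 MM U hloc)
  have hNloc : IsLocal N :=
    nn_isLocal (UProd MM U) vsQ (q_symm MM U hloc) (q_mono MM U hloc)
      (q_comp MM U hloc) (q_bound MM U hloc) (q_dd0 MM U hloc) hE hD
  have hNmod : LocalModel N T := by
    refine ⟨hNloc, ?_⟩
    intro φ hφT hφN
    let ve : (e : Empty) → (F : Finset (SkF L α)) → (MM F).Dom (emptySorts L e) :=
      fun e => e.elim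
    have h1 : φ.Realize (UProd MM U)
        (fun e : Empty => ((fun e' : Empty => e'.elim : (e : Empty) → N.Dom (emptySorts L e)) e).1) :=
      pos_up_sub (UProd MM U) vsQ (q_dd0 MM U hloc) φ (fun e => e.elim) hφN
    have e1 : (fun e : Empty =>
        ((fun e' : Empty => e'.elim : (e : Empty) → N.Dom (emptySorts L e)) e).1) =
        (fun e : Empty => umk MM U (ve e)) := funext fun e => e.elim
    rw [e1] at h1
    have h3 := los_up MM U φ ve h1
    obtain ⟨F, hF⟩ := h3.exists
    refine (hMM F).2 φ hφT ?_
    have e2 : (fun e : Empty => ve e F) =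
        (fun e : Empty => e.elim : (e : Empty) → (MM F).Dom (emptySorts L e)) :=
      funext fun e => e.elim
    rw [e2] at hF
    exact hF
  have hmem : ∀ a, vsQ a ∈ carrierS (UProd MM U) vsQ (σ a) := fun a =>
    ⟨L.dd0 (σ a), vsQ a, Or.inr ⟨a, rfl, rfl⟩, (q_dd0 MM U hloc _ _).mpr rfl⟩
  refine ⟨N, fun a => ⟨vsQ a, hmem a⟩, hNmod, ?_⟩
  intro φ hφ
  have hev : ∀ᶠ F in (U : Filter (Finset (SkF L α))),
      LPosForm.Realize (MM F) φ (fun a => vv F a) := by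
    refine (hU {enc φ}).mono fun F hF => ?_
    exact hRe F φ hφ (hF (Finset.mem_singleton_self (enc φ)))
  have hQ : φ.Realize (UProd MM U) (fun a => umk MM U (fun F => vv F a)) :=
    los_down MM U φ (fun a F => vv F a) hev
  exact lpos_down_sub (UProd MM U) vsQ (q_symm MM U hloc) (q_comp MM U hloc)
    (q_dd0 MM U hloc) φ _ hQ

end PTETT

/-- Every partial local positive type of a locally satisfiable negative
local theory `T` extends to a local positive type of `T`. -/
theorem partial_type_extends_to_type
    {L : LocalLanguage} (T : Set (PosSentence L))
    (hT : IsNegLocalTheory T) (hsat : LocSat T)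
    (α : Type) (σ : α → L.Sorts) (Γ : Set (LPosForm L α σ))
    (hΓ : IsPartialLType T Γ) :
    ∃ Γ' : Set (LPosForm L α σ), IsLType T Γ' ∧ Γ ⊆ Γ' := by
  classical
  obtain ⟨M₀, v₀, hM₀, hreal₀⟩ := hΓ
  set B : Set (LPosForm L α σ) := PTETT.BsetD M₀ hM₀.1 v₀ with hBdef
  set S : Set (Set (LPosForm L α σ)) :=
    {Δ | (Γ ∪ B ⊆ Δ) ∧ IsPartialLType T Δ} with hSdef
  have hmem0 : Γ ∪ B ∈ S := by
    refine ⟨subset_rfl, M₀, v₀, hM₀, fun φ hφ => ?_⟩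
    rcases hφ with hφ | hφ
    · exact hreal₀ φ hφ
    · exact PTETT.Bset_realize_self M₀ hM₀.1 v₀ φ hφ
  have hchains : ∀ cc ⊆ S, IsChain (· ⊆ ·) cc → cc.Nonempty →
      ∃ ub ∈ S, ∀ s ∈ cc, s ⊆ ub := by
    intro cc hccS hchain hccne
    refine ⟨⋃₀ cc, ⟨?_, ?_⟩, fun s hs => Set.subset_sUnion_of_mem hs⟩
    · obtain ⟨Δ, hΔ⟩ := hccne
      exact subset_trans (hccS hΔ).1 (Set.subset_sUnion_of_mem hΔ)
    · exact PTETT.sat_sUnion M₀ hM₀.1 v₀ cc hchain hccne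
        (fun Δ hΔ => subset_trans Set.subset_union_right (hccS hΔ).1)
        (fun Δ hΔ => (hccS hΔ).2)
  obtain ⟨m, hm0, hmax⟩ := zorn_subset_nonempty S hchains (Γ ∪ B) hmem0
  refine ⟨m, ⟨hmax.1.2, ?_⟩, fun φ hφ => hm0 (Or.inl hφ)⟩
  intro Γ'' hΓ'' hsub
  have hmem'' : Γ'' ∈ S := ⟨subset_trans hmax.1.1 hsub, hΓ''⟩
  exact subset_antisymm (hmax.2 hmem'' hsub) hsub
end
end

section
/- Let M be a local L-structure, x a pointed variable, and a, b ∈ M^x. Then ltp^M_+(a) ⊆ ltp^M_+(b) if and only if tp^M_+(a) ⊆ tp^M_+(b), where tp^M_+(c) denotes the set of all positive formulas on x satisfied by c in M. -/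
noncomputable section

/-! ## Auxiliary machinery for Statement 4 -/

/-- Lift a term along the context extension by one variable. -/
def tlift {L : LocalLanguage} {α : Type} {σ : α → L.Sorts} {s : L.Sorts} :
    {t' : L.Sorts} → LTerm L α σ t' → LTerm L (Option α) (osort s σ) t'
  | _, .var a => .var (some a)
  | _, .const c => .const c

theorem tlift_realize {L : LocalLanguage} (M : LStructure L) {α : Type} {σ : α → L.Sorts}
    {s : L.Sorts} {t' : L.Sorts} (t : LTerm L α σ t') (x : M.Dom s)
    (v : (a : α) → M.Dom (σ a)) :
    (tlift (s := s) t).realize M (vcons x v) = t.realize M v := by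
  cases t <;> rfl

theorem tpair_realize {L : LocalLanguage} (M : LStructure L) {α : Type} {σ : α → L.Sorts}
    {s t : L.Sorts} (t₁ : LTerm L α σ s) (t₂ : LTerm L α σ t)
    (v : (a : α) → M.Dom (σ a)) :
    (fun i => ((tpair t₁ t₂) i).realize M v) = dpair (t₁.realize M v) (t₂.realize M v) := by
  funext i
  match i with
  | ⟨0, _⟩ => rfl
  | ⟨1, _⟩ => rfl

/-- Translation of local positive formulas into positive formulas. -/
def LPosForm.toPos {L : LocalLanguage} :
    {α : Type} → {σ : α → L.Sorts} → LPosForm L α σ → PosForm L α σ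
  | _, _, .rel R ts => .rel R ts
  | _, _, .and φ ψ => .and φ.toPos ψ.toPos
  | _, _, .or φ ψ => .or φ.toPos ψ.toPos
  | _, _, .lex s d t φ =>
      .ex s (.and (.rel (L.locToRel d)
        (tpair (LTerm.var (none : Option _)) (tlift t))) φ.toPos)

theorem LPosForm.toPos_realize {L : LocalLanguage} (M : LStructure L) :
    ∀ {α : Type} {σ : α → L.Sorts} (φ : LPosForm L α σ) (v : (a : α) → M.Dom (σ a)),
      φ.toPos.Realize M v ↔ φ.Realize M v
  | _, _, .rel R ts, v => Iff.rfl
  | _, _, .and φ ψ, v => by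
      simp only [toPos, PosForm.Realize, LPosForm.Realize,
        toPos_realize M φ v, toPos_realize M ψ v]
  | _, _, .or φ ψ, v => by
      simp only [toPos, PosForm.Realize, LPosForm.Realize,
        toPos_realize M φ v, toPos_realize M ψ v]
  | _, _, .lex s d t φ, v => by
      simp only [toPos, PosForm.Realize, LPosForm.Realize]
      constructor
      · rintro ⟨x, h1, h2⟩
        refine ⟨x, ?_, (toPos_realize M φ _).1 h2⟩
        have := tpair_realize M (LTerm.var (none : Option _)) (tlift (s := s) t) (vcons x v)
        replace h1 := (congrArg (M.relMap (L.locToRel d)) this).mp h1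
        rw [tlift_realize M t x v] at h1
        exact h1
      · rintro ⟨x, h1, h2⟩
        refine ⟨x, ?_, (toPos_realize M φ _).2 h2⟩
        refine (congrArg (M.relMap (L.locToRel d))
          (tpair_realize M (LTerm.var (none : Option _)) (tlift (s := s) t) (vcons x v))).mpr ?_
        rw [tlift_realize M t x v]
        exact h1

/-- Every positive formula realized by a tuple is implied by a local positive formula
realized by that tuple, provided every sort has a term in the context. -/
theorem localize {L : LocalLanguage} (M : LStructure L) (hM : IsLocal M)
    {α : Type} {σ : α → L.Sorts} (φ : PosForm L α σ) :
    (∀ s, Nonempty (LTerm L α σ s)) → ∀ v : (a : α) → M.Dom (σ a), φ.Realize M v →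
      ∃ ψ : LPosForm L α σ, ψ.Realize M v ∧
        ∀ w : (a : α) → M.Dom (σ a), ψ.Realize M w → φ.Realize M w := by
  induction φ with
  | rel R ts => exact fun _ v h => ⟨.rel R ts, h, fun _ hw => hw⟩
  | and φ ψ ihφ ihψ =>
      rintro ht v ⟨h1, h2⟩
      obtain ⟨ψ₁, r1, i1⟩ := ihφ ht v h1
      obtain ⟨ψ₂, r2, i2⟩ := ihψ ht v h2
      exact ⟨.and ψ₁ ψ₂, ⟨r1, r2⟩, fun w hw => ⟨i1 w hw.1, i2 w hw.2⟩⟩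
  | or φ ψ ihφ ihψ =>
      rintro ht v (h | h)
      · obtain ⟨ψ₁, r1, i1⟩ := ihφ ht v h
        exact ⟨ψ₁, r1, fun w hw => Or.inl (i1 w hw)⟩
      · obtain ⟨ψ₂, r2, i2⟩ := ihψ ht v h
        exact ⟨ψ₂, r2, fun w hw => Or.inr (i2 w hw)⟩
  | ex s φ ih =>
      rintro ht v ⟨x, hx⟩
      obtain ⟨t⟩ := ht s
      obtain ⟨d, hd⟩ := hM.total x (t.realize M v)
      have ht' := fun s' => (ht s').map (fun t => tlift (s := s) (t' := s') t)
      obtain ⟨ψ, r1, i1⟩ := ih ht' (vcons x v) hx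
      refine ⟨.lex s d t ψ, ⟨x, hd, r1⟩, ?_⟩
      rintro w ⟨y, _, hψ⟩
      exact ⟨y, i1 _ hψ⟩

/-- For a local structure `M`, a pointed variable `(α, σ)` and tuples
`a, b ∈ M^x`: `ltp⁺(a) ⊆ ltp⁺(b)` iff `tp⁺(a) ⊆ tp⁺(b)`. -/
theorem ltp_subset_iff_ptp_subset
    {L : LocalLanguage} (M : LStructure L) (hM : IsLocal M)
    (α : Type) (σ : α → L.Sorts) (hpt : VPointed σ)
    (a b : (x : α) → M.Dom (σ x)) :
    ltp M a ⊆ ltp M b ↔ ptp M a ⊆ ptp M b := by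
  constructor
  · intro h φ hφ
    obtain ⟨ψ, r1, i1⟩ := localize M hM φ
      (fun s => by
        by_cases hs : s ∈ Set.range σ
        · obtain ⟨x, hx⟩ := hs
          exact ⟨hx ▸ LTerm.var x⟩
        · exact ⟨.const (hpt s hs).some⟩) a hφ
    exact i1 b (h r1)
  · intro h φ hφ
    exact (LPosForm.toPos_realize M φ b).1 (h ((LPosForm.toPos_realize M φ a).2 hφ))
end
end
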